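/- arXiv:2307.14344 — 3 statements merged into one kernel-verified Lean document; each statement's English description precedes it below -/
import Mathlib

section
/- For any matrix Q ∈ ℝ^{n×k} and any λ > 0, s > 0, the singular value hard thresholding T_{√(2λs)}(Q) is a minimizer over V ∈ ℝ^{n×k} of the function V ↦ λ·s·rank(V) + (1/2)‖Q − V‖²_F; that is, T_{√(2λs)}(Q) belongs to the proximal mapping prox_{s·h}(Q) of h(X) = λ·rank(X). -/
open Matrix Finset Filter Topology

noncomputable section

/-- The vector of singular values of a real `n × k` matrix, in decreasing order:
`sval A i` is the `i`-th largest singular value of `A`. -/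
noncomputable def sval {n k : ℕ} (A : Matrix (Fin n) (Fin k) ℝ) : Fin k → ℝ := fun i =>
  Real.sqrt
    ((Matrix.isHermitian_conjTranspose_mul_self A).eigenvalues
      (Tuple.sort (Matrix.isHermitian_conjTranspose_mul_self A).eigenvalues i.rev))

/-- The largest singular value of a matrix. -/
noncomputable def smax {n k : ℕ} (A : Matrix (Fin n) (Fin k) ℝ) : ℝ := ⨆ i, sval A i

open Classical in
/-- The support of the singular value vector of `A`. -/
noncomputable def suppσ {n k : ℕ} (A : Matrix (Fin n) (Fin k) ℝ) : Finset (Fin k) :=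
  Finset.univ.filter (fun i => sval A i ≠ 0)

/-- The Frobenius norm. -/
noncomputable def frobNorm {n k : ℕ} (A : Matrix (Fin n) (Fin k) ℝ) : ℝ :=
  Real.sqrt (∑ i, ∑ j, (A i j) ^ 2)

/-- The Frobenius inner product `⟨A, B⟩ = trace (Aᵀ * B)`. -/
noncomputable def frobInner {n k : ℕ} (A B : Matrix (Fin n) (Fin k) ℝ) : ℝ :=
  (Aᵀ * B).trace

/-- The rectangular diagonal matrix of singular values of `A` (in decreasing order). -/
noncomputable def svalMatrix {n k : ℕ} (A : Matrix (Fin n) (Fin k) ℝ) :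
    Matrix (Fin n) (Fin k) ℝ :=
  Matrix.of fun i j => if (i : ℕ) = (j : ℕ) then sval A j else 0

/-- `p = (U, V)` is a singular value decomposition of `A`: `U`, `V` orthogonal and
`A = U Σ Vᵀ`, where `Σ` is the rectangular diagonal matrix of singular values of `A`
in decreasing order. -/
def IsSVD {n k : ℕ} (A : Matrix (Fin n) (Fin k) ℝ)
    (p : Matrix (Fin n) (Fin n) ℝ × Matrix (Fin k) (Fin k) ℝ) : Prop :=
  p.1 ∈ Matrix.orthogonalGroup (Fin n) ℝ ∧ p.2 ∈ Matrix.orthogonalGroup (Fin k) ℝ ∧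
    A = p.1 * svalMatrix A * p.2ᵀ

open Classical in
/-- The singular value hard-thresholding operator `T_θ`. -/
noncomputable def hardThreshold {n k : ℕ} (θ : ℝ) (A : Matrix (Fin n) (Fin k) ℝ) :
    Matrix (Fin n) (Fin k) ℝ :=
  if h : ∃ p, IsSVD A p then
    h.choose.1 *
      (Matrix.of fun i j => if |svalMatrix A i j| ≤ θ then 0 else svalMatrix A i j) *
      h.choose.2ᵀ
  else 0

open Classical in
/-- The support projection operator `P_S` on the singular values of a matrix. -/
noncomputable def suppProj {n k : ℕ} (S : Finset (Fin k)) (A : Matrix (Fin n) (Fin k) ℝ) :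
    Matrix (Fin n) (Fin k) ℝ :=
  if h : ∃ p, IsSVD A p then
    h.choose.1 * (Matrix.of fun i j => if j ∈ S then svalMatrix A i j else 0) * h.choose.2ᵀ
  else 0

end

attribute [local instance] Matrix.frobeniusNormedAddCommGroup Matrix.frobeniusNormedSpace

section Aux

variable {n k t : ℕ}

/-! ### basic facts about `sval` -/

lemma aux_psd (Q : Matrix (Fin n) (Fin k) ℝ) : (Qᵀ*Q).PosSemidef := by
  have := Matrix.posSemidef_conjTranspose_mul_self Q
  rwa [Matrix.conjTranspose_eq_transpose_of_trivial] at this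

lemma aux_ev_nonneg (Q : Matrix (Fin n) (Fin k) ℝ) (i : Fin k) :
    0 ≤ (Matrix.isHermitian_conjTranspose_mul_self Q).eigenvalues i :=
  (aux_psd Q).eigenvalues_nonneg i

lemma aux_sq_sval (Q : Matrix (Fin n) (Fin k) ℝ) (i : Fin k) : sval Q i ^ 2 =
    (Matrix.isHermitian_conjTranspose_mul_self Q).eigenvalues
      (Tuple.sort (Matrix.isHermitian_conjTranspose_mul_self Q).eigenvalues i.rev) := by
  rw [sval, Real.sq_sqrt (aux_ev_nonneg Q _)]

lemma aux_sval_nonneg (Q : Matrix (Fin n) (Fin k) ℝ) (i : Fin k) : 0 ≤ sval Q i :=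
  Real.sqrt_nonneg _

lemma aux_sval_antitone (Q : Matrix (Fin n) (Fin k) ℝ) : Antitone (sval Q) := by
  intro i j hij
  exact Real.sqrt_le_sqrt (Tuple.monotone_sort
    (Matrix.isHermitian_conjTranspose_mul_self Q).eigenvalues (Fin.rev_le_rev.mpr hij))

lemma aux_spec (Q : Matrix (Fin n) (Fin k) ℝ) :
    Qᵀ*Q = ((Matrix.isHermitian_conjTranspose_mul_self Q).eigenvectorUnitary : Matrix (Fin k) (Fin k) ℝ)
    * Matrix.diagonal ((Matrix.isHermitian_conjTranspose_mul_self Q).eigenvalues)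
    * ((Matrix.isHermitian_conjTranspose_mul_self Q).eigenvectorUnitary : Matrix (Fin k) (Fin k) ℝ)ᵀ := by
  have h := (Matrix.isHermitian_conjTranspose_mul_self Q).spectral_theorem
  rw [← Matrix.conjTranspose_eq_transpose_of_trivial]
  refine h.trans ?_
  rw [Unitary.conjStarAlgAut_apply]
  simp [Function.comp_def, Matrix.star_eq_conjTranspose, RCLike.ofReal_real_eq_id,
    Matrix.conjTranspose_eq_transpose_of_trivial]

lemma aux_eigB (Q : Matrix (Fin n) (Fin k) ℝ) :
    (((Matrix.isHermitian_conjTranspose_mul_self Q).eigenvectorUnitary : Matrix (Fin k) (Fin k) ℝ))ᵀ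
    * ((Matrix.isHermitian_conjTranspose_mul_self Q).eigenvectorUnitary : Matrix (Fin k) (Fin k) ℝ) = 1 := by
  have h := ((Matrix.isHermitian_conjTranspose_mul_self Q).eigenvectorUnitary).prop
  rw [Matrix.mem_unitaryGroup_iff'] at h
  rwa [Matrix.star_eq_conjTranspose, Matrix.conjTranspose_eq_transpose_of_trivial] at h

/-! ### combinatorial lemmas -/

lemma aux_antitone_filter_iff {f : Fin k → ℝ} (hf : Antitone f) (θ : ℝ) (j : Fin k) :
    θ < f j ↔ (j : ℕ) < (univ.filter (fun i => θ < f i)).card := by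
  constructor
  · intro h
    have hsub : Finset.Iic j ⊆ univ.filter (fun i => θ < f i) := by
      intro i hi
      simp only [Finset.mem_Iic] at hi
      exact Finset.mem_filter.mpr ⟨Finset.mem_univ _, lt_of_lt_of_le h (hf hi)⟩
    have := Finset.card_le_card hsub
    rw [Fin.card_Iic] at this
    omega
  · intro h
    by_contra hc
    push_neg at hc
    have hsub : univ.filter (fun i => θ < f i) ⊆ Finset.Iio j := by
      intro i hi
      simp only [Finset.mem_filter] at hi
      simp only [Finset.mem_Iio]
      by_contra hij
      push_neg at hij
      exact absurd (lt_of_lt_of_le hi.2 (hf hij)) (not_lt.mpr hc)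
    have := Finset.card_le_card hsub
    rw [Fin.card_Iio] at this
    omega

lemma aux_card_filter_ico {a r : ℕ} (hr : r ≤ k) :
    (univ.filter (fun i : Fin k => a ≤ (i : ℕ) ∧ (i : ℕ) < r)).card = r - a := by
  rw [← Nat.card_Ico]
  apply Finset.card_bij' (fun (i : Fin k) _ => (i : ℕ))
      (fun (j : ℕ) (hj : j ∈ Finset.Ico a r) => (⟨j, lt_of_lt_of_le (Finset.mem_Ico.mp hj).2 hr⟩ : Fin k))
  all_goals intro x hx
  all_goals simp_all [Finset.mem_filter, Finset.mem_Ico]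
  all_goals exact Finset.mem_Ico.mp hx

lemma aux_card_filter_lt (ht : t ≤ k) :
    (univ.filter (fun i : Fin k => (i : ℕ) < t)).card = t := by
  have h := aux_card_filter_ico (k := k) (a := 0) ht
  simpa using h

lemma aux_sum_smallest_le (ht : t ≤ k) (μ : Fin k → ℝ) (hμ : Monotone μ)
    (c : Fin k → ℝ) (h0 : ∀ i, 0 ≤ c i) (h1 : ∀ i, c i ≤ 1) (hsum : ∑ i, c i = t) :
    ∑ i ∈ univ.filter (fun i : Fin k => (i : ℕ) < t), μ i ≤ ∑ i, μ i * c i := by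
  rcases eq_or_lt_of_le ht with rfl | htk
  · have hc : ∀ i ∈ (univ : Finset (Fin t)), c i = 1 := by
      intro i _
      by_contra hne
      have hlt : c i < 1 := lt_of_le_of_ne (h1 i) hne
      have h2 : ∑ j, c j < ∑ _j : Fin t, (1:ℝ) :=
        Finset.sum_lt_sum (fun j _ => h1 j) ⟨i, Finset.mem_univ i, hlt⟩
      rw [hsum] at h2
      simp at h2
    have hall : ∀ i ∈ (univ : Finset (Fin t)), (i:ℕ) < t := fun i _ => i.isLt
    rw [Finset.filter_true_of_mem hall]
    apply Finset.sum_le_sum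
    intro i _
    rw [hc i (Finset.mem_univ i), mul_one]
  · set ν := μ ⟨t, htk⟩ with hν
    have key : 0 ≤ ∑ i, (μ i - ν) * (c i - (if (i:ℕ) < t then 1 else 0)) := by
      apply Finset.sum_nonneg
      intro i _
      by_cases hi : (i:ℕ) < t
      · simp only [hi, if_pos]
        have h1' : μ i ≤ ν := hμ (by simp [Fin.le_def]; omega)
        nlinarith [h1 i]
      · simp only [hi, if_neg, if_false]
        have h1' : ν ≤ μ i := hμ (by simp [Fin.le_def]; omega)
        simp only [sub_zero]
        exact mul_nonneg (by linarith) (h0 i)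
    have hχ : ∑ i : Fin k, (if (i:ℕ) < t then (1:ℝ) else 0) = t := by
      rw [Finset.sum_boole]
      simp [aux_card_filter_lt ht]
    have hμχ : ∑ i : Fin k, μ i * (if (i:ℕ) < t then (1:ℝ) else 0)
        = ∑ i ∈ univ.filter (fun i : Fin k => (i : ℕ) < t), μ i := by
      rw [Finset.sum_filter]
      congr 1; ext i
      by_cases hi : (i:ℕ) < t <;> simp [hi]
    have expand : ∑ i, (μ i - ν) * (c i - (if (i:ℕ) < t then 1 else 0))
        = ∑ i, μ i * c i - ∑ i ∈ univ.filter (fun i : Fin k => (i : ℕ) < t), μ i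
          - ν * (∑ i, c i - t) := by
      rw [← hμχ, ← hχ, ← Finset.sum_sub_distrib, ← Finset.sum_sub_distrib,
        Finset.mul_sum, ← Finset.sum_sub_distrib]
      apply Finset.sum_congr rfl
      intro i _
      ring
    rw [expand, hsum] at key
    simp at key
    linarith

/-! ### sum of squares of entries -/

def sumSq (X : Matrix (Fin n) (Fin k) ℝ) : ℝ := ∑ i, ∑ j, X i j ^ 2

lemma sumSq_nonneg (X : Matrix (Fin n) (Fin k) ℝ) : 0 ≤ sumSq X :=
  Finset.sum_nonneg fun _ _ => Finset.sum_nonneg fun _ _ => sq_nonneg _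

lemma aux_frobNorm_sq (X : Matrix (Fin n) (Fin k) ℝ) : frobNorm X ^ 2 = sumSq X := by
  rw [frobNorm]
  exact Real.sq_sqrt (sumSq_nonneg X)

lemma sumSq_eq_trace (X : Matrix (Fin n) (Fin k) ℝ) : sumSq X = (Xᵀ * X).trace := by
  rw [Matrix.trace, sumSq, Finset.sum_comm]
  apply Finset.sum_congr rfl
  intro j _
  simp [Matrix.mul_apply, Matrix.diag, sq]

lemma aux_mul_cancel_left {m : ℕ} {W : Matrix (Fin k) (Fin t) ℝ} (hW : Wᵀ * W = 1)
    (X : Matrix (Fin t) (Fin m) ℝ) : Wᵀ * (W * X) = X := by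
  rw [← Matrix.mul_assoc, hW, Matrix.one_mul]

lemma sumSq_conj {U : Matrix (Fin n) (Fin n) ℝ} {V : Matrix (Fin k) (Fin k) ℝ}
    (hU : Uᵀ * U = 1) (hV : Vᵀ * V = 1) (D : Matrix (Fin n) (Fin k) ℝ) :
    sumSq (U * D * Vᵀ) = sumSq D := by
  rw [sumSq_eq_trace, sumSq_eq_trace]
  have h1 : (U * D * Vᵀ)ᵀ * (U * D * Vᵀ) = V * ((Dᵀ * D) * Vᵀ) := by
    simp only [Matrix.transpose_mul, Matrix.transpose_transpose, Matrix.mul_assoc,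
      aux_mul_cancel_left hU]
  rw [h1, Matrix.trace_mul_comm, Matrix.mul_assoc, hV, Matrix.mul_one]

lemma sumSq_mul_le {W : Matrix (Fin k) (Fin t) ℝ} (hW : Wᵀ * W = 1)
    (X : Matrix (Fin n) (Fin k) ℝ) : sumSq (X * W) ≤ sumSq X := by
  set P : Matrix (Fin k) (Fin k) ℝ := W * Wᵀ with hPdef
  set Z : Matrix (Fin k) (Fin k) ℝ := 1 - P with hZdef
  have hP : P * P = P := by
    rw [hPdef, Matrix.mul_assoc, aux_mul_cancel_left hW]
  have hZ2 : Z * Z = Z := by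
    rw [hZdef]
    rw [Matrix.sub_mul, Matrix.mul_sub, Matrix.mul_sub, hP]
    simp
  have hZt : Zᵀ = Z := by
    rw [hZdef, hPdef]
    simp [Matrix.transpose_sub, Matrix.transpose_mul]
  have h1 : sumSq (X * W) = ((Xᵀ * X) * P).trace := by
    rw [sumSq_eq_trace]
    have : (X * W)ᵀ * (X * W) = Wᵀ * ((Xᵀ * X) * W) := by
      simp only [Matrix.transpose_mul, Matrix.mul_assoc]
    rw [this, Matrix.trace_mul_comm, Matrix.mul_assoc]
  have h2 : sumSq (X * Z) = (Xᵀ * X).trace - ((Xᵀ * X) * P).trace := by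
    rw [sumSq_eq_trace]
    have : (X * Z)ᵀ * (X * Z) = Z * ((Xᵀ * X) * Z) := by
      simp only [Matrix.transpose_mul, hZt, Matrix.mul_assoc]
    rw [this, Matrix.trace_mul_comm, Matrix.mul_assoc, hZ2]
    rw [hZdef, Matrix.mul_sub, Matrix.mul_one, Matrix.trace_sub]
  have h3 := sumSq_nonneg (X * Z)
  rw [sumSq_eq_trace X]
  linarith

/-! ### trace bound by smallest eigenvalues -/

lemma aux_smallest_le_trace (Q : Matrix (Fin n) (Fin k) ℝ) (ht : t ≤ k)
    {W : Matrix (Fin k) (Fin t) ℝ} (hW : Wᵀ * W = 1) :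
    ∑ i ∈ univ.filter (fun i : Fin k => (i : ℕ) < t),
      (Matrix.isHermitian_conjTranspose_mul_self Q).eigenvalues
        (Tuple.sort (Matrix.isHermitian_conjTranspose_mul_self Q).eigenvalues i)
      ≤ (Wᵀ * (Qᵀ * Q) * W).trace := by
  set hH := Matrix.isHermitian_conjTranspose_mul_self Q
  set B : Matrix (Fin k) (Fin k) ℝ := (hH.eigenvectorUnitary : Matrix (Fin k) (Fin k) ℝ) with hBdef
  set ev := hH.eigenvalues with hevdef
  have hB1 : Bᵀ * B = 1 := aux_eigB Q
  have hB2 : B * Bᵀ = 1 := mul_eq_one_comm.mp hB1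
  set G : Matrix (Fin k) (Fin t) ℝ := Bᵀ * W with hGdef
  have hG : Gᵀ * G = 1 := by
    rw [hGdef, Matrix.transpose_mul, Matrix.transpose_transpose, Matrix.mul_assoc,
      ← Matrix.mul_assoc B, hB2, Matrix.one_mul, hW]
  set c : Fin k → ℝ := fun l => ∑ j, (G l j) ^ 2 with hcdef
  have htrace : (Wᵀ * (Qᵀ * Q) * W).trace = ∑ l, ev l * c l := by
    rw [aux_spec Q]
    have h1 : Wᵀ * (B * Matrix.diagonal ev * Bᵀ) * W = Gᵀ * (Matrix.diagonal ev * G) := by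
      rw [hGdef, Matrix.transpose_mul, Matrix.transpose_transpose]
      simp only [Matrix.mul_assoc]
    rw [h1, Matrix.trace]
    simp only [Matrix.diag_apply, Matrix.mul_apply, Matrix.transpose_apply,
      Matrix.diagonal_mul]
    rw [Finset.sum_comm]
    apply Finset.sum_congr rfl
    intro l _
    rw [hcdef, Finset.mul_sum]
    apply Finset.sum_congr rfl
    intro j _
    have hd : ∑ x, Matrix.diagonal ev l x * G x j = ev l * G l j := by
      rw [Finset.sum_eq_single l]
      · simp
      · intro x _ hx
        simp [Matrix.diagonal_apply_ne' ev hx]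
      · intro h
        exact absurd (Finset.mem_univ l) h
    rw [hd]
    ring
  have hPll : ∀ l, 0 ≤ c l ∧ c l ≤ 1 := by
    intro l
    set P : Matrix (Fin k) (Fin k) ℝ := G * Gᵀ with hPdef
    have hPP : P * P = P := by rw [hPdef, Matrix.mul_assoc, aux_mul_cancel_left hG]
    have hPt : Pᵀ = P := by rw [hPdef]; simp [Matrix.transpose_mul]
    have hcl : c l = P l l := by
      rw [hcdef, hPdef, Matrix.mul_apply]
      simp [sq, Matrix.transpose_apply]
    have hsq : P l l = ∑ j, (P l j) ^ 2 := by
      conv_lhs => rw [← hPP]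
      rw [Matrix.mul_apply]
      apply Finset.sum_congr rfl
      intro j _
      have h := congrFun (congrFun hPt j) l
      rw [Matrix.transpose_apply] at h
      rw [← h]; ring
    constructor
    · rw [hcl, hsq]; exact Finset.sum_nonneg fun j _ => sq_nonneg _
    · rw [hcl]
      have h1 : (P l l) ^ 2 ≤ P l l := by
        calc (P l l) ^ 2 ≤ ∑ j, (P l j) ^ 2 :=
              Finset.single_le_sum (fun j _ => sq_nonneg (P l j)) (Finset.mem_univ l)
          _ = P l l := hsq.symm
      nlinarith [h1]
  have hcsum : ∑ l, c l = t := by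
    have hcol : ∀ j, ∑ l, G l j ^ 2 = 1 := by
      intro j
      have h := congrFun (congrFun hG j) j
      rw [Matrix.mul_apply] at h
      simp only [Matrix.transpose_apply, Matrix.one_apply_eq] at h
      rw [← h]
      apply Finset.sum_congr rfl
      intro l _
      ring
    rw [hcdef]
    rw [Finset.sum_comm]
    simp [hcol]
  rw [htrace]
  have hfinal := aux_sum_smallest_le ht (fun i => ev (Tuple.sort ev i)) (Tuple.monotone_sort ev)
    (fun i => c (Tuple.sort ev i)) (fun i => (hPll _).1) (fun i => (hPll _).2)
    (by rw [Equiv.sum_comp (Tuple.sort ev) c, hcsum])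
  calc ∑ i ∈ univ.filter (fun i : Fin k => (i : ℕ) < t), ev (Tuple.sort ev i) ≤
      ∑ i, ev (Tuple.sort ev i) * c (Tuple.sort ev i) := hfinal
    _ = ∑ l, ev l * c l := Equiv.sum_comp (Tuple.sort ev) (fun l => ev l * c l)

/-! ### kernel orthonormal columns -/

lemma aux_exists_kernel_W (V : Matrix (Fin n) (Fin k) ℝ) (hm : V.rank < k) :
    ∃ W : Matrix (Fin k) (Fin (k - V.rank)) ℝ, Wᵀ * W = 1 ∧ V * W = 0 := by
  set K : Submodule ℝ (EuclideanSpace ℝ (Fin k)) :=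
    LinearMap.ker (V.mulVecLin ∘ₗ (WithLp.linearEquiv 2 ℝ (Fin k → ℝ)).toLinearMap) with hKdef
  have hfin : Module.finrank ℝ K = k - V.rank := by
    have h := LinearMap.finrank_range_add_finrank_ker
      (V.mulVecLin ∘ₗ (WithLp.linearEquiv 2 ℝ (Fin k → ℝ)).toLinearMap)
    rw [finrank_euclideanSpace_fin] at h
    have h1 : Module.finrank ℝ (LinearMap.range
        (V.mulVecLin ∘ₗ (WithLp.linearEquiv 2 ℝ (Fin k → ℝ)).toLinearMap)) = V.rank := by
      rw [LinearMap.range_comp_of_range_eq_top _ (LinearEquiv.range _)]; rfl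
    have h2 : Module.finrank ℝ K
        = Module.finrank ℝ (LinearMap.ker
          (V.mulVecLin ∘ₗ (WithLp.linearEquiv 2 ℝ (Fin k → ℝ)).toLinearMap)) := rfl
    omega
  set b := stdOrthonormalBasis ℝ K
  set b' := b.reindex (finCongr hfin)
  refine ⟨Matrix.of (fun a j => ((b' j : EuclideanSpace ℝ (Fin k)) a)), ?_, ?_⟩
  · ext j j'
    rw [Matrix.mul_apply, Matrix.one_apply]
    have horth := b'.orthonormal
    rw [orthonormal_iff_ite] at horth
    have h := horth j j'
    rw [Submodule.coe_inner, PiLp.inner_apply] at h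
    simp only [RCLike.inner_apply, starRingEnd_apply, star_trivial] at h
    rw [← h]
    apply Finset.sum_congr rfl
    intro a _
    simp [Matrix.transpose_apply]
    ring
  · ext i j
    have hker : (b' j : EuclideanSpace ℝ (Fin k)) ∈ K := (b' j).2
    have hker2 : V.mulVecLin (WithLp.ofLp (b' j : EuclideanSpace ℝ (Fin k))) = 0 :=
      LinearMap.mem_ker.mp hker
    rw [Matrix.mulVecLin_apply] at hker2
    have h0 := congrFun hker2 i
    rw [Pi.zero_apply] at h0
    rw [Matrix.mul_apply]
    simp only [Matrix.of_apply, Matrix.zero_apply]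
    rw [← h0]
    rfl

/-! ### rank facts -/

lemma aux_card_sval_ne (Q : Matrix (Fin n) (Fin k) ℝ) :
    (univ.filter fun j : Fin k => sval Q j ≠ 0).card = Q.rank := by
  set hH := Matrix.isHermitian_conjTranspose_mul_self Q
  set ev := hH.eigenvalues with hevdef
  set e := Tuple.sort ev with hedef
  have h1 : Q.rank = (Qᴴ*Q).rank := by
    rw [Matrix.conjTranspose_eq_transpose_of_trivial, Matrix.rank_transpose_mul_self]
  rw [h1, hH.rank_eq_card_non_zero_eigs, Fintype.card_subtype]
  apply Finset.card_bij (fun (j : Fin k) _ => e j.rev)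
  · intro j hj
    simp only [Finset.mem_filter, Finset.mem_univ, true_and] at hj ⊢
    intro hc
    apply hj
    rw [sval, hc, Real.sqrt_zero]
  · intro j hj j' hj' hjj
    have := (Tuple.sort ev).injective hjj
    exact Fin.rev_injective this
  · intro l hl
    simp only [Finset.mem_filter, Finset.mem_univ, true_and] at hl
    refine ⟨(e.symm l).rev, ?_, ?_⟩
    · simp only [Finset.mem_filter, Finset.mem_univ, true_and]
      rw [sval]
      simp only [Fin.rev_rev, Equiv.apply_symm_apply]
      intro hc
      have := aux_ev_nonneg Q l
      have h0 : ev l = 0 := by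
        by_contra hne
        have hpos : 0 < ev l := lt_of_le_of_ne this (Ne.symm hne)
        have hpos' : 0 < ev (e (e.symm l)) := by rw [Equiv.apply_symm_apply]; exact hpos
        exact absurd hc (Real.sqrt_ne_zero'.mpr hpos')
      exact hl h0
    · simp [Fin.rev_rev]

lemma aux_rank_le_n (Q : Matrix (Fin n) (Fin k) ℝ) : Q.rank ≤ n :=
  Q.rank_le_card_height.trans (by simp)

lemma aux_sval_ne_lt_rank (Q : Matrix (Fin n) (Fin k) ℝ) (j : Fin k) (h : sval Q j ≠ 0) :
    (j : ℕ) < Q.rank := by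
  have h0 : 0 < sval Q j := lt_of_le_of_ne (aux_sval_nonneg Q j) (Ne.symm h)
  have hmem := (aux_antitone_filter_iff (aux_sval_antitone Q) 0 j).mp h0
  have hfeq : (univ.filter fun i : Fin k => (0:ℝ) < sval Q i)
      = univ.filter fun i : Fin k => sval Q i ≠ 0 := by
    apply Finset.filter_congr
    intro i _
    simp only [eq_iff_iff, ne_eq]
    constructor
    · intro hp; exact ne_of_gt hp
    · intro hp; exact lt_of_le_of_ne (aux_sval_nonneg Q i) (Ne.symm hp)
  rw [hfeq, aux_card_sval_ne Q] at hmem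
  exact hmem

end Aux

open Classical in
theorem aux_exists_isSVD {n k : ℕ} (Q : Matrix (Fin n) (Fin k) ℝ) : ∃ p, IsSVD Q p := by
  set hH := Matrix.isHermitian_conjTranspose_mul_self Q with hHdef
  set ev := hH.eigenvalues with hevdef
  set e := Tuple.sort ev with hedef
  set B : Matrix (Fin k) (Fin k) ℝ := (hH.eigenvectorUnitary : Matrix (Fin k) (Fin k) ℝ) with hBdef
  have hB1 : Bᵀ * B = 1 := aux_eigB Q
  have hB2 : B * Bᵀ = 1 := mul_eq_one_comm.mp hB1
  set Vm : Matrix (Fin k) (Fin k) ℝ := Matrix.of (fun a j => B a (e j.rev)) with hVmdef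
  have hinj : Function.Injective (fun j : Fin k => e j.rev) := by
    intro a b hab
    simpa using (e.injective hab)
  have hV1 : Vmᵀ * Vm = 1 := by
    ext j j'
    rw [Matrix.mul_apply, Matrix.one_apply]
    have h := congrFun (congrFun hB1 (e j.rev)) (e j'.rev)
    rw [Matrix.mul_apply, Matrix.one_apply] at h
    simp only [Matrix.transpose_apply] at h ⊢
    simp only [hVmdef, Matrix.of_apply]
    rw [h]
    congr 1
    simp only [eq_iff_iff]
    constructor
    · intro hh; exact hinj hh
    · intro hh; rw [hh]
  have hV2 : Vm * Vmᵀ = 1 := mul_eq_one_comm.mp hV1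
  set M : Matrix (Fin n) (Fin k) ℝ := Q * Vm with hMdef
  -- key: Mᵀ M = diagonal of sorted eigenvalues
  have hBV : Bᵀ * Vm = Matrix.of (fun l j => if l = e j.rev then (1:ℝ) else 0) := by
    ext l j
    rw [Matrix.mul_apply]
    have h := congrFun (congrFun hB1 l) (e j.rev)
    rw [Matrix.mul_apply, Matrix.one_apply] at h
    simp only [Matrix.transpose_apply] at h ⊢
    simp only [hVmdef, Matrix.of_apply]
    exact h
  have hMM : Mᵀ * M = Matrix.diagonal (fun j => ev (e j.rev)) := by
    have h1 : Mᵀ * M = (Bᵀ * Vm)ᵀ * (Matrix.diagonal ev * (Bᵀ * Vm)) := by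
      rw [hMdef, Matrix.transpose_mul]
      rw [Matrix.mul_assoc, ← Matrix.mul_assoc Qᵀ, aux_spec Q]
      simp only [Matrix.transpose_mul, Matrix.transpose_transpose, Matrix.mul_assoc, hBdef]
      rfl
    rw [h1, hBV]
    ext j j'
    rw [Matrix.mul_apply, Matrix.diagonal_apply]
    have : ∀ l, ((Matrix.of (fun l j => if l = e j.rev then (1:ℝ) else 0))ᵀ j l) *
        ((Matrix.diagonal ev * Matrix.of (fun l j => if l = e j.rev then (1:ℝ) else 0)) l j')
        = if l = e j.rev then (if l = e j'.rev then ev l else 0) else 0 := by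
      intro l
      rw [Matrix.transpose_apply, Matrix.of_apply, Matrix.diagonal_mul, Matrix.of_apply]
      by_cases h1 : l = e j.rev <;> by_cases h2 : l = e j'.rev <;> simp [h1, h2]
    rw [Finset.sum_congr rfl (fun l _ => this l)]
    rw [Finset.sum_ite_eq' univ (e j.rev)]
    simp only [Finset.mem_univ, if_true]
    by_cases hjj : j = j'
    · subst hjj; simp
    · have : ¬ (e j.rev = e j'.rev) := fun hc => hjj (hinj hc)
      simp [this, hjj]
  have hcolnorm : ∀ j, ∑ i, (M i j) ^ 2 = sval Q j ^ 2 := by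
    intro j
    have h := congrFun (congrFun hMM j) j
    rw [Matrix.mul_apply, Matrix.diagonal_apply_eq] at h
    have h2 : ∑ i, (M i j) ^ 2 = ev (e j.rev) := by
      rw [← h]
      apply Finset.sum_congr rfl
      intro i _
      rw [Matrix.transpose_apply]; ring
    rw [h2]
    exact (aux_sq_sval Q j).symm
  have hcolorth : ∀ j j', j ≠ j' → ∑ i, M i j * M i j' = 0 := by
    intro j j' hjj
    have h := congrFun (congrFun hMM j) j'
    rw [Matrix.mul_apply, Matrix.diagonal_apply_ne _ hjj] at h
    rw [← h]
    apply Finset.sum_congr rfl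
    intro i _
    rw [Matrix.transpose_apply]
  -- candidate left singular vectors
  set sset : Set (Fin n) := {i | ∃ j : Fin k, (j:ℕ) = (i:ℕ) ∧ sval Q j ≠ 0} with hsset
  set cvec : Fin n → EuclideanSpace ℝ (Fin n) := fun i =>
    if h : ∃ j : Fin k, (j:ℕ) = (i:ℕ) ∧ sval Q j ≠ 0 then
      (sval Q h.choose)⁻¹ • (WithLp.toLp 2 (fun a => M a h.choose)) else 0 with hcvec
  have horth : Orthonormal ℝ (sset.restrict cvec) := by
    rw [orthonormal_iff_ite]
    rintro ⟨i, hi⟩ ⟨i', hi'⟩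
    have hex : ∃ j : Fin k, (j:ℕ) = (i:ℕ) ∧ sval Q j ≠ 0 := hi
    have hex' : ∃ j : Fin k, (j:ℕ) = (i':ℕ) ∧ sval Q j ≠ 0 := hi'
    show inner ℝ (cvec i) (cvec i') = _
    simp only [hcvec]
    rw [dif_pos hex, dif_pos hex']
    rw [PiLp.inner_apply]
    simp only [RCLike.inner_apply, conj_trivial, PiLp.smul_apply, Pi.smul_apply, smul_eq_mul]
    have hval : ∀ a : Fin n,
        ((sval Q hex.choose)⁻¹ • (WithLp.toLp 2 (fun a => M a hex.choose)) : EuclideanSpace ℝ (Fin n)) a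
        = (sval Q hex.choose)⁻¹ * M a hex.choose := fun a => rfl
    by_cases heq : i = i'
    · subst heq
      rw [if_pos rfl]
      have hch : hex' = hex := rfl
      rw [hch]
      have hspec := hex.choose_spec
      have hsum : ∑ a, ((sval Q hex.choose)⁻¹ * M a hex.choose)
            * ((sval Q hex.choose)⁻¹ * M a hex.choose)
          = (sval Q hex.choose)⁻¹ * (sval Q hex.choose)⁻¹ * ∑ a, (M a hex.choose)^2 := by
        rw [Finset.mul_sum]
        apply Finset.sum_congr rfl
        intro a _
        ring
      rw [hsum, hcolnorm]
      have hne := hspec.2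
      field_simp
    · have hii : (⟨i, hi⟩ : sset) ≠ ⟨i', hi'⟩ := by
        intro hc
        exact heq (congrArg Subtype.val hc)
      rw [if_neg hii]
      have hne : hex.choose ≠ hex'.choose := by
        intro hc
        apply heq
        have h1 := hex.choose_spec.1
        have h2 := hex'.choose_spec.1
        rw [hc] at h1
        have : (i:ℕ) = (i':ℕ) := by omega
        exact Fin.ext this
      have hsum : ∑ a, ((sval Q hex.choose)⁻¹ * M a hex.choose)
            * ((sval Q hex'.choose)⁻¹ * M a hex'.choose)
          = (sval Q hex.choose)⁻¹ * (sval Q hex'.choose)⁻¹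
            * ∑ a, M a hex.choose * M a hex'.choose := by
        rw [Finset.mul_sum]
        apply Finset.sum_congr rfl
        intro a _
        ring
      rw [Finset.sum_congr rfl (fun a _ => mul_comm ((sval Q hex'.choose)⁻¹ * M a hex'.choose)
        ((sval Q hex.choose)⁻¹ * M a hex.choose)), hsum, hcolorth _ _ hne, mul_zero]
  have hcard : Module.finrank ℝ (EuclideanSpace ℝ (Fin n)) = Fintype.card (Fin n) := by
    simp [finrank_euclideanSpace_fin]
  obtain ⟨b, hb⟩ := horth.exists_orthonormalBasis_extension_of_card_eq hcard
  set U : Matrix (Fin n) (Fin n) ℝ := Matrix.of (fun a i => (b i) a) with hUdef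
  have hU1 : Uᵀ * U = 1 := by
    ext i i'
    rw [Matrix.mul_apply, Matrix.one_apply]
    have horthb := b.orthonormal
    rw [orthonormal_iff_ite] at horthb
    have h := horthb i i'
    rw [PiLp.inner_apply] at h
    simp only [RCLike.inner_apply, conj_trivial] at h
    rw [← h]
    apply Finset.sum_congr rfl
    intro a _
    simp [hUdef, Matrix.transpose_apply]
    ring
  have hU2 : U * Uᵀ = 1 := mul_eq_one_comm.mp hU1
  -- main identity
  have hQV : Q * Vm = U * svalMatrix Q := by
    ext a j
    have hL : (Q * Vm) a j = M a j := rfl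
    rw [hL]
    conv_rhs => rw [Matrix.mul_apply]
    by_cases hσ : sval Q j = 0
    · have hM0 : M a j = 0 := by
        have h := hcolnorm j
        rw [hσ] at h
        norm_num at h
        have := (Finset.sum_eq_zero_iff_of_nonneg (fun i _ => sq_nonneg (M i j))).mp h a (Finset.mem_univ a)
        exact pow_eq_zero_iff (n := 2) (by norm_num) |>.mp this
      rw [hM0]
      symm
      apply Finset.sum_eq_zero
      intro i _
      rw [svalMatrix, Matrix.of_apply]
      by_cases hij : (i:ℕ) = (j:ℕ) <;> simp [hij, hσ]
    · have hjn : (j:ℕ) < n := lt_of_lt_of_le (aux_sval_ne_lt_rank Q j hσ) (aux_rank_le_n Q)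
      set i₀ : Fin n := ⟨(j:ℕ), hjn⟩ with hi₀
      have hmem : i₀ ∈ sset := ⟨j, rfl, hσ⟩
      have hrhs : ∑ i, U a i * svalMatrix Q i j = U a i₀ * sval Q j := by
        rw [Finset.sum_eq_single i₀]
        · rw [svalMatrix, Matrix.of_apply, if_pos rfl]
        · intro i _ hii
          rw [svalMatrix, Matrix.of_apply, if_neg, mul_zero]
          intro hc
          exact hii (Fin.ext hc)
        · intro h; exact absurd (Finset.mem_univ i₀) h
      rw [hrhs]
      have hbc : b i₀ = cvec i₀ := hb i₀ hmem
      have hexr : ∃ j' : Fin k, (j':ℕ) = (i₀:ℕ) ∧ sval Q j' ≠ 0 := ⟨j, rfl, hσ⟩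
      have hc : cvec i₀ = (sval Q hexr.choose)⁻¹ • (WithLp.toLp 2 (fun a => M a hexr.choose)) := by
        simp only [hcvec]
        rw [dif_pos hexr]
      have hcj : hexr.choose = j := by
        apply Fin.ext
        exact hexr.choose_spec.1
      have hUai : U a i₀ = (sval Q j)⁻¹ * M a j := by
        have : U a i₀ = (b i₀) a := rfl
        rw [this, hbc, hc, hcj]
        rfl
      rw [hUai]
      field_simp
  have hQ : Q = U * svalMatrix Q * Vmᵀ := by
    have h1 : Q * (Vm * Vmᵀ) = U * svalMatrix Q * Vmᵀ := by
      rw [← Matrix.mul_assoc, hQV]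
    rwa [hV2, Matrix.mul_one] at h1
  refine ⟨(U, Vm), ?_, ?_, hQ⟩
  · rw [Matrix.mem_orthogonalGroup_iff]
    exact hU2
  · rw [Matrix.mem_orthogonalGroup_iff]
    exact hV2


section Main

variable {n k : ℕ}

/-- The thresholded singular value matrix appearing inside `hardThreshold`. -/
noncomputable def threshE (θ : ℝ) (Q : Matrix (Fin n) (Fin k) ℝ) : Matrix (Fin n) (Fin k) ℝ :=
  Matrix.of fun i j => if |svalMatrix Q i j| ≤ θ then 0 else svalMatrix Q i j

lemma threshE_apply {θ : ℝ} (hθ : 0 ≤ θ) (Q : Matrix (Fin n) (Fin k) ℝ) (i : Fin n) (j : Fin k) :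
    threshE θ Q i j = if (i:ℕ) = (j:ℕ) ∧ θ < sval Q j then sval Q j else 0 := by
  rw [threshE, Matrix.of_apply, svalMatrix, Matrix.of_apply]
  by_cases hij : (i:ℕ) = (j:ℕ)
  · rw [if_pos hij, abs_of_nonneg (aux_sval_nonneg Q j)]
    by_cases hlt : θ < sval Q j
    · rw [if_neg (not_le.mpr hlt), if_pos ⟨hij, hlt⟩]
    · rw [if_pos (not_lt.mp hlt), if_neg (fun hc => hlt hc.2)]
  · rw [if_neg hij, abs_zero, if_pos hθ, if_neg (fun hc => hij hc.1)]

lemma aux_rank_thresh {θ : ℝ} (hθpos : 0 < θ) (Q : Matrix (Fin n) (Fin k) ℝ)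
    {U : Matrix (Fin n) (Fin n) ℝ} {Vm : Matrix (Fin k) (Fin k) ℝ}
    (hU1 : Uᵀ * U = 1) (hV1 : Vmᵀ * Vm = 1) :
    (U * threshE θ Q * Vmᵀ).rank = (univ.filter fun j : Fin k => θ < sval Q j).card := by
  have hUdet : IsUnit U.det := Matrix.isUnit_det_of_left_inverse hU1
  have hVdet : IsUnit (Vmᵀ).det := Matrix.isUnit_det_of_right_inverse hV1
  rw [Matrix.rank_mul_eq_left_of_isUnit_det Vmᵀ (U * threshE θ Q) hVdet]
  rw [Matrix.rank_mul_eq_right_of_isUnit_det U (threshE θ Q) hUdet]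
  rw [← Matrix.rank_transpose_mul_self]
  have hdiag : (threshE θ Q)ᵀ * threshE θ Q
      = Matrix.diagonal (fun j => if θ < sval Q j then sval Q j ^ 2 else 0) := by
    ext j j'
    rw [Matrix.mul_apply, Matrix.diagonal_apply]
    by_cases hjj : j = j'
    · subst hjj
      rw [if_pos rfl]
      by_cases hlt : θ < sval Q j
      · have hne : sval Q j ≠ 0 := ne_of_gt (hθpos.trans hlt)
        have hjn : (j:ℕ) < n := lt_of_lt_of_le (aux_sval_ne_lt_rank Q j hne) (aux_rank_le_n Q)
        rw [Finset.sum_eq_single (⟨(j:ℕ), hjn⟩ : Fin n)]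
        · rw [Matrix.transpose_apply, threshE_apply hθpos.le, if_pos ⟨rfl, hlt⟩, if_pos hlt]
          ring
        · intro i _ hii
          rw [Matrix.transpose_apply, threshE_apply hθpos.le,
            if_neg (fun hc => hii (Fin.ext hc.1)), zero_mul]
        · intro h; exact absurd (Finset.mem_univ _) h
      · rw [if_neg hlt]
        apply Finset.sum_eq_zero
        intro i _
        rw [Matrix.transpose_apply, threshE_apply hθpos.le,
          if_neg (fun hc => hlt hc.2), zero_mul]
    · rw [if_neg hjj]
      apply Finset.sum_eq_zero
      intro i _
      rw [Matrix.transpose_apply, threshE_apply hθpos.le, threshE_apply hθpos.le]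
      by_cases h2 : (i:ℕ) = (j':ℕ) ∧ θ < sval Q j'
      · rw [if_neg (fun h1 => hjj (Fin.ext (h1.1.symm.trans h2.1))), zero_mul]
      · rw [if_neg h2, mul_zero]
  rw [hdiag, Matrix.rank_diagonal, Fintype.card_subtype]
  congr 1
  apply Finset.filter_congr
  intro j _
  simp only [eq_iff_iff, ne_eq]
  by_cases hlt : θ < sval Q j
  · have hne : sval Q j ≠ 0 := ne_of_gt (hθpos.trans hlt)
    simp [hlt, pow_eq_zero_iff, hne]
  · simp [hlt]

lemma aux_sumSq_thresh {θ : ℝ} (hθpos : 0 < θ) (Q : Matrix (Fin n) (Fin k) ℝ)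
    {U : Matrix (Fin n) (Fin n) ℝ} {Vm : Matrix (Fin k) (Fin k) ℝ}
    (hU1 : Uᵀ * U = 1) (hV1 : Vmᵀ * Vm = 1) (hQ : Q = U * svalMatrix Q * Vmᵀ) :
    sumSq (Q - U * threshE θ Q * Vmᵀ)
      = ∑ j ∈ univ.filter (fun j : Fin k =>
          (univ.filter fun i : Fin k => θ < sval Q i).card ≤ (j : ℕ)), sval Q j ^ 2 := by
  set r := (univ.filter fun i : Fin k => θ < sval Q i).card with hrdef
  have hiff : ∀ j : Fin k, θ < sval Q j ↔ (j:ℕ) < r :=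
    fun j => aux_antitone_filter_iff (aux_sval_antitone Q) θ j
  have hdiff : Q - U * threshE θ Q * Vmᵀ = U * (svalMatrix Q - threshE θ Q) * Vmᵀ := by
    have h : U * (svalMatrix Q - threshE θ Q) * Vmᵀ
        = U * svalMatrix Q * Vmᵀ - U * threshE θ Q * Vmᵀ := by
      rw [Matrix.mul_sub, Matrix.sub_mul]
    rw [h, ← hQ]
  rw [hdiff, sumSq_conj hU1 hV1, sumSq, Finset.sum_comm, Finset.sum_filter]
  apply Finset.sum_congr rfl
  intro j _
  have hDij : ∀ i : Fin n, (svalMatrix Q - threshE θ Q) i j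
      = if (i:ℕ) = (j:ℕ) ∧ sval Q j ≤ θ then sval Q j else 0 := by
    intro i
    rw [Matrix.sub_apply, svalMatrix, Matrix.of_apply, threshE_apply hθpos.le]
    by_cases hij : (i:ℕ) = (j:ℕ)
    · by_cases hlt : θ < sval Q j
      · rw [if_pos hij, if_pos ⟨hij, hlt⟩, sub_self,
          if_neg (fun hc => (not_le.mpr hlt) hc.2)]
      · rw [if_pos hij, if_neg (fun hc => hlt hc.2), sub_zero,
          if_pos ⟨hij, not_lt.mp hlt⟩]
    · rw [if_neg hij, if_neg (fun hc => hij hc.1), sub_zero, if_neg (fun hc => hij hc.1)]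
  by_cases hr : r ≤ (j:ℕ)
  · rw [if_pos hr]
    have hσθ : sval Q j ≤ θ := by
      by_contra hc
      push_neg at hc
      have := (hiff j).mp hc
      omega
    by_cases hσ0 : sval Q j = 0
    · rw [hσ0]
      have h0 : ∀ i : Fin n, (svalMatrix Q - threshE θ Q) i j = 0 := by
        intro i
        rw [hDij i, hσ0]
        simp
      rw [Finset.sum_congr rfl (fun i _ => by rw [h0 i])]
      simp
    · have hjn : (j:ℕ) < n := lt_of_lt_of_le (aux_sval_ne_lt_rank Q j hσ0) (aux_rank_le_n Q)
      rw [Finset.sum_eq_single (⟨(j:ℕ), hjn⟩ : Fin n)]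
      · rw [hDij, if_pos ⟨rfl, hσθ⟩]
      · intro i _ hii
        rw [hDij, if_neg (fun hc => hii (Fin.ext hc.1))]
        norm_num
      · intro h; exact absurd (Finset.mem_univ _) h
  · rw [if_neg hr]
    have hθσ : θ < sval Q j := by
      rw [hiff j]
      omega
    apply Finset.sum_eq_zero
    intro i _
    rw [hDij, if_neg (fun hc => (not_le.mpr hθσ) hc.2)]
    norm_num

lemma aux_eckart_young (Q V : Matrix (Fin n) (Fin k) ℝ) :
    ∑ j ∈ univ.filter (fun j : Fin k => V.rank ≤ (j:ℕ)), sval Q j ^ 2 ≤ sumSq (Q - V) := by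
  by_cases hm : V.rank < k
  · obtain ⟨W, hW, hVW⟩ := aux_exists_kernel_W V hm
    have h1 : (Q - V) * W = Q * W := by rw [Matrix.sub_mul, hVW, sub_zero]
    have h2 := sumSq_mul_le hW (Q - V)
    rw [h1] at h2
    have h3 : sumSq (Q * W) = (Wᵀ * (Qᵀ * Q) * W).trace := by
      rw [sumSq_eq_trace]
      congr 1
      rw [Matrix.transpose_mul]
      simp only [Matrix.mul_assoc]
    have h4 := aux_smallest_le_trace Q (Nat.sub_le k V.rank) hW
    have h5 : ∑ j ∈ univ.filter (fun j : Fin k => V.rank ≤ (j:ℕ)), sval Q j ^ 2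
        = ∑ i ∈ univ.filter (fun i : Fin k => (i:ℕ) < k - V.rank),
            (Matrix.isHermitian_conjTranspose_mul_self Q).eigenvalues
              (Tuple.sort (Matrix.isHermitian_conjTranspose_mul_self Q).eigenvalues i) := by
      apply Finset.sum_bij' (fun (j : Fin k) _ => j.rev) (fun (i : Fin k) _ => i.rev)
      · intro j hj
        simp only [Finset.mem_filter, Finset.mem_univ, true_and] at hj ⊢
        have h := j.isLt
        rw [Fin.val_rev]
        omega
      · intro i hi
        simp only [Finset.mem_filter, Finset.mem_univ, true_and] at hi ⊢
        have h := i.isLt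
        rw [Fin.val_rev]
        omega
      · intro j _; exact Fin.rev_rev j
      · intro i _; exact Fin.rev_rev i
      · intro j _
        exact aux_sq_sval Q j
    rw [h5]
    linarith
  · push_neg at hm
    have hempty : univ.filter (fun j : Fin k => V.rank ≤ (j:ℕ)) = ∅ := by
      rw [Finset.filter_eq_empty_iff]
      intro j _
      have := j.isLt
      omega
    rw [hempty, Finset.sum_empty]
    exact sumSq_nonneg _

lemma aux_g_mono {θ lam s : ℝ} (Q : Matrix (Fin n) (Fin k) ℝ)
    (hls : 0 < lam * s) (hθ0 : 0 ≤ θ) (hθsq : θ ^ 2 = 2 * (lam * s)) (m : ℕ) :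
    lam * s * ((univ.filter fun j : Fin k => θ < sval Q j).card : ℝ)
      + (1/2) * ∑ j ∈ univ.filter (fun j : Fin k =>
          (univ.filter fun i : Fin k => θ < sval Q i).card ≤ (j : ℕ)), sval Q j ^ 2
    ≤ lam * s * (m : ℝ)
      + (1/2) * ∑ j ∈ univ.filter (fun j : Fin k => m ≤ (j : ℕ)), sval Q j ^ 2 := by
  set r := (univ.filter fun i : Fin k => θ < sval Q i).card with hrdef
  have hrk : r ≤ k := le_trans (Finset.card_filter_le _ _) (by simp)
  have hiff : ∀ j : Fin k, θ < sval Q j ↔ (j:ℕ) < r :=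
    fun j => aux_antitone_filter_iff (aux_sval_antitone Q) θ j
  have hsplit : ∀ a b : ℕ, a ≤ b →
      ∑ j ∈ univ.filter (fun j : Fin k => a ≤ (j:ℕ)), sval Q j ^ 2
      = (∑ j ∈ univ.filter (fun j : Fin k => b ≤ (j:ℕ)), sval Q j ^ 2)
        + ∑ j ∈ univ.filter (fun j : Fin k => a ≤ (j:ℕ) ∧ (j:ℕ) < b), sval Q j ^ 2 := by
    intro a b hab
    rw [← Finset.sum_filter_add_sum_filter_not
      (univ.filter (fun j : Fin k => a ≤ (j:ℕ))) (fun j => b ≤ (j:ℕ))]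
    congr 1
    · apply Finset.sum_congr _ (fun _ _ => rfl)
      rw [Finset.filter_filter]
      apply Finset.filter_congr
      intro j _
      omega
    · apply Finset.sum_congr _ (fun _ _ => rfl)
      rw [Finset.filter_filter]
      apply Finset.filter_congr
      intro j _
      omega
  rcases le_or_gt r m with hrm | hmr
  · have hs1 := hsplit r m hrm
    have hbound : ∑ j ∈ univ.filter (fun j : Fin k => r ≤ (j:ℕ) ∧ (j:ℕ) < m), sval Q j ^ 2
        ≤ ((m - r : ℕ) : ℝ) * (2 * (lam * s)) := by
      have hcard : (univ.filter (fun j : Fin k => r ≤ (j:ℕ) ∧ (j:ℕ) < m)).card ≤ m - r := by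
        have h1 : (univ.filter (fun j : Fin k => r ≤ (j:ℕ) ∧ (j:ℕ) < m)).card
            ≤ (Finset.Ico r m).card := by
          refine Finset.card_le_card_of_injOn (fun j => (j:ℕ)) ?_ ?_
          · intro j hj
            simp only [Finset.mem_coe, Finset.mem_filter, Finset.mem_univ, true_and] at hj
            exact Finset.mem_Ico.mpr hj
          · intro a _ b _ hab
            exact Fin.ext hab
        rwa [Nat.card_Ico] at h1
      calc ∑ j ∈ univ.filter (fun j : Fin k => r ≤ (j:ℕ) ∧ (j:ℕ) < m), sval Q j ^ 2
          ≤ (univ.filter (fun j : Fin k => r ≤ (j:ℕ) ∧ (j:ℕ) < m)).card • (2 * (lam * s)) := by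
            apply Finset.sum_le_card_nsmul
            intro j hj
            simp only [Finset.mem_filter, Finset.mem_univ, true_and] at hj
            have hσθ : sval Q j ≤ θ := by
              by_contra hc
              push_neg at hc
              have := (hiff j).mp hc
              omega
            calc sval Q j ^ 2 ≤ θ ^ 2 :=
                  pow_le_pow_left₀ (aux_sval_nonneg Q j) hσθ 2
              _ = 2 * (lam * s) := hθsq
        _ = ((univ.filter (fun j : Fin k => r ≤ (j:ℕ) ∧ (j:ℕ) < m)).card : ℝ) * (2 * (lam * s)) := by
            rw [nsmul_eq_mul]
        _ ≤ ((m - r : ℕ) : ℝ) * (2 * (lam * s)) := by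
            apply mul_le_mul_of_nonneg_right _ (by positivity)
            exact_mod_cast hcard
    have hcast : ((m - r : ℕ) : ℝ) = (m : ℝ) - (r : ℝ) := by
      rw [Nat.cast_sub hrm]
    rw [hcast] at hbound
    rw [hs1]
    linarith
  · have hs1 := hsplit m r hmr.le
    have hcard : (univ.filter (fun j : Fin k => m ≤ (j:ℕ) ∧ (j:ℕ) < r)).card = r - m :=
      aux_card_filter_ico hrk
    have hbound : ((r - m : ℕ) : ℝ) * (2 * (lam * s))
        ≤ ∑ j ∈ univ.filter (fun j : Fin k => m ≤ (j:ℕ) ∧ (j:ℕ) < r), sval Q j ^ 2 := by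
      calc ((r - m : ℕ) : ℝ) * (2 * (lam * s))
          = (univ.filter (fun j : Fin k => m ≤ (j:ℕ) ∧ (j:ℕ) < r)).card • (2 * (lam * s)) := by
            rw [hcard, nsmul_eq_mul]
        _ ≤ ∑ j ∈ univ.filter (fun j : Fin k => m ≤ (j:ℕ) ∧ (j:ℕ) < r), sval Q j ^ 2 := by
            apply Finset.card_nsmul_le_sum
            intro j hj
            simp only [Finset.mem_filter, Finset.mem_univ, true_and] at hj
            have hθσ : θ < sval Q j := by
              rw [hiff j]
              omega
            calc 2 * (lam * s) = θ ^ 2 := hθsq.symm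
              _ ≤ sval Q j ^ 2 := pow_le_pow_left₀ hθ0 hθσ.le 2
    have hcast : ((r - m : ℕ) : ℝ) = (r : ℝ) - (m : ℝ) := by
      rw [Nat.cast_sub hmr.le]
    rw [hcast] at hbound
    rw [hs1]
    linarith

end Main



theorem hardThreshold_mem_prox {n k : ℕ} (Q : Matrix (Fin n) (Fin k) ℝ) (lam s : ℝ)
    (hlam : 0 < lam) (hs : 0 < s) :
    ∀ V : Matrix (Fin n) (Fin k) ℝ,
      lam * s * ((hardThreshold (Real.sqrt (2 * lam * s)) Q).rank : ℝ) +
          (1 / 2) * frobNorm (Q - hardThreshold (Real.sqrt (2 * lam * s)) Q) ^ 2 ≤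
        lam * s * ((V).rank : ℝ) + (1 / 2) * frobNorm (Q - V) ^ 2 := by
  have hls : 0 < lam * s := mul_pos hlam hs
  intro V
  set θ := Real.sqrt (2 * lam * s) with hθdef
  have h2ls : (0:ℝ) ≤ 2 * lam * s := by positivity
  have hθpos : 0 < θ := Real.sqrt_pos.mpr (by positivity)
  have hθsq : θ ^ 2 = 2 * (lam * s) := by rw [hθdef, Real.sq_sqrt h2ls]; ring
  have hex := aux_exists_isSVD Q
  obtain ⟨hU, hV, hQ⟩ := hex.choose_spec
  have hU1 : (hex.choose.1)ᵀ * hex.choose.1 = 1 := by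
    rw [Matrix.mem_orthogonalGroup_iff'] at hU
    exact hU
  have hV1 : (hex.choose.2)ᵀ * hex.choose.2 = 1 := by
    rw [Matrix.mem_orthogonalGroup_iff'] at hV
    exact hV
  have hT : hardThreshold θ Q = hex.choose.1 * threshE θ Q * (hex.choose.2)ᵀ := by
    simp only [hardThreshold]
    rw [dif_pos hex]
    rfl
  rw [hT, aux_frobNorm_sq, aux_frobNorm_sq,
    aux_rank_thresh hθpos Q hU1 hV1, aux_sumSq_thresh hθpos Q hU1 hV1 hQ]
  have hEY := aux_eckart_young Q V
  have hg := aux_g_mono Q hls hθpos.le hθsq V.rank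
  linarith
end

section
/- If the step size satisfies s ≤ min{2λ/G², 1/L}, then the PGD iterates satisfy supp(σ(X^{t+1})) ⊆ supp(σ(X^t)) for all t ≥ 0, and consequently rank(X^{t+1}) ≤ rank(X^t) for all t ≥ 0; i.e., the support of the singular value vectors of the sequence {X^t} shrinks and the rank of the sequence decreases. -/
open Matrix Finset Filter Topology

section helpers

open Matrix Finset

variable {n k : ℕ}

private lemma sval_eq (A : Matrix (Fin n) (Fin k) ℝ) (i : Fin k) :
    sval A i = Real.sqrt ((Matrix.isHermitian_conjTranspose_mul_self A).eigenvalues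
      ((Fin.revPerm.trans
        (Tuple.sort (Matrix.isHermitian_conjTranspose_mul_self A).eigenvalues)) i)) := rfl

private lemma sval_nonneg (A : Matrix (Fin n) (Fin k) ℝ) (i : Fin k) : 0 ≤ sval A i := by
  rw [sval_eq]; exact Real.sqrt_nonneg _

private lemma smax_nonneg (A : Matrix (Fin n) (Fin k) ℝ) : 0 ≤ smax A :=
  Real.iSup_nonneg fun i => sval_nonneg A i

private lemma sval_le_smax (A : Matrix (Fin n) (Fin k) ℝ) (i : Fin k) : sval A i ≤ smax A :=
  le_ciSup (Set.Finite.bddAbove (Set.finite_range _)) i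

private lemma sval_anti (A : Matrix (Fin n) (Fin k) ℝ) : Antitone (sval A) := by
  intro i j hij
  rw [sval_eq, sval_eq]
  apply Real.sqrt_le_sqrt
  exact Tuple.monotone_sort ((Matrix.isHermitian_conjTranspose_mul_self A).eigenvalues)
    (show Fin.revPerm j ≤ Fin.revPerm i from Fin.rev_le_rev.mpr hij)

private lemma card_filter_perm {k : ℕ} (e : Equiv.Perm (Fin k)) (p : Fin k → Prop)
    [DecidablePred p] :
    (Finset.univ.filter fun i => p (e i)).card = (Finset.univ.filter p).card := by
  apply Finset.card_bij (fun i _ => e i)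
  · intro a ha
    simp only [Finset.mem_filter, Finset.mem_univ, true_and] at ha ⊢
    exact ha
  · intro a _ b _ hab
    exact e.injective hab
  · intro b hb
    refine ⟨e.symm b, ?_, by simp⟩
    simp only [Finset.mem_filter, Finset.mem_univ, true_and, Equiv.apply_symm_apply] at hb ⊢
    exact hb

private lemma card_sval_filter (A : Matrix (Fin n) (Fin k) ℝ) (p : ℝ → Prop)
    [DecidablePred p] :
    (Finset.univ.filter fun i => p (sval A i)).card
      = (Finset.univ.filter fun j =>
          p (Real.sqrt ((Matrix.isHermitian_conjTranspose_mul_self A).eigenvalues j))).card := by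
  exact card_filter_perm
      (Fin.revPerm.trans (Tuple.sort (Matrix.isHermitian_conjTranspose_mul_self A).eigenvalues))
      (fun j => p (Real.sqrt ((Matrix.isHermitian_conjTranspose_mul_self A).eigenvalues j)))

open Classical in
private lemma card_suppσ (A : Matrix (Fin n) (Fin k) ℝ) : (suppσ A).card = A.rank := by
  classical
  have h1 : (suppσ A).card
      = (Finset.univ.filter fun j =>
          (Matrix.isHermitian_conjTranspose_mul_self A).eigenvalues j ≠ 0).card := by
    rw [show suppσ A = Finset.univ.filter (fun i => sval A i ≠ 0) from by
      unfold suppσ; congr]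
    rw [card_sval_filter A (fun r => r ≠ 0)]
    congr 1
    apply Finset.filter_congr
    intro j _
    have h0 := Matrix.eigenvalues_conjTranspose_mul_self_nonneg A j
    simp only [ne_eq, Real.sqrt_eq_zero']
    constructor
    · intro h h'; exact h (le_of_eq h')
    · intro h h'; exact h (le_antisymm h' h0)
  rw [h1, ← Fintype.card_subtype,
    ← Matrix.IsHermitian.rank_eq_card_non_zero_eigs (Matrix.isHermitian_conjTranspose_mul_self A),
    Matrix.rank_conjTranspose_mul_self]

private lemma suppσ_lower (A : Matrix (Fin n) (Fin k) ℝ) {i j : Fin k} (hij : j ≤ i)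
    (hi : i ∈ suppσ A) : j ∈ suppσ A := by
  simp only [suppσ, Finset.mem_filter, Finset.mem_univ, true_and] at hi ⊢
  have h0 : 0 < sval A i := lt_of_le_of_ne (sval_nonneg A i) (Ne.symm hi)
  exact ne_of_gt (lt_of_lt_of_le h0 (sval_anti A hij))

private lemma suppσ_subset_of_card_le {A B : Matrix (Fin n) (Fin k) ℝ}
    (h : (suppσ A).card ≤ (suppσ B).card) : suppσ A ⊆ suppσ B := by
  intro i hi
  by_contra hiB
  have h1 : Finset.Iic i ⊆ suppσ A := fun j hj => suppσ_lower A (Finset.mem_Iic.mp hj) hi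
  have h2 : suppσ B ⊆ Finset.Iio i := by
    intro j hj
    rw [Finset.mem_Iio]
    by_contra hj'
    exact hiB (suppσ_lower B (not_lt.mp hj') hj)
  have h3 := Finset.card_le_card h1
  have h4 := Finset.card_le_card h2
  rw [Fin.card_Iic] at h3
  rw [Fin.card_Iio] at h4
  omega

private lemma spectral_quad {k : ℕ} {H : Matrix (Fin k) (Fin k) ℝ} (hH : H.IsHermitian) :
    ∃ V : Matrix (Fin k) (Fin k) ℝ,
      (∀ x : Fin k → ℝ, x ⬝ᵥ (H *ᵥ x) = ∑ j, hH.eigenvalues j * ((V *ᵥ x) j) ^ 2) ∧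
      (∀ x : Fin k → ℝ, x ⬝ᵥ x = ∑ j, ((V *ᵥ x) j) ^ 2) ∧
      Function.Injective (fun x : Fin k → ℝ => V *ᵥ x) := by
  classical
  set U : Matrix (Fin k) (Fin k) ℝ := (hH.eigenvectorUnitary : Matrix (Fin k) (Fin k) ℝ) with hU
  have hU1 : U * star U = 1 := Matrix.mem_unitaryGroup_iff.mp hH.eigenvectorUnitary.2
  have hvm : ∀ x : Fin k → ℝ, x ᵥ* U = star U *ᵥ x := by
    intro x
    rw [Matrix.star_eq_conjTranspose, Matrix.conjTranspose_eq_transpose_of_trivial,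
      Matrix.mulVec_transpose]
  refine ⟨star U, ?_, ?_, ?_⟩
  · intro x
    conv_lhs => rw [hH.spectral_theorem, Unitary.conjStarAlgAut_apply]
    rw [← hU, ← Matrix.mulVec_mulVec, ← Matrix.mulVec_mulVec, Matrix.dotProduct_mulVec, hvm]
    simp only [dotProduct, Matrix.mulVec_diagonal, Function.comp_apply,
      RCLike.ofReal_real_eq_id, id_eq]
    exact Finset.sum_congr rfl fun j _ => by ring
  · intro x
    conv_lhs => rw [show x ⬝ᵥ x = x ⬝ᵥ ((U * star U) *ᵥ x) from by rw [hU1, Matrix.one_mulVec]]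
    rw [← Matrix.mulVec_mulVec, Matrix.dotProduct_mulVec, hvm]
    simp only [dotProduct]
    exact Finset.sum_congr rfl fun j _ => by ring
  · intro a b hab
    have h1 : U *ᵥ (star U *ᵥ a) = U *ᵥ (star U *ᵥ b) := by
      simp only at hab; rw [hab]
    simpa only [Matrix.mulVec_mulVec, hU1, Matrix.one_mulVec] using h1

private lemma dot_mulVec_self (Y : Matrix (Fin n) (Fin k) ℝ) (x : Fin k → ℝ) :
    x ⬝ᵥ ((Yᴴ * Y) *ᵥ x) = (Y *ᵥ x) ⬝ᵥ (Y *ᵥ x) := by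
  rw [← Matrix.mulVec_mulVec, Matrix.dotProduct_mulVec]
  congr 1
  rw [Matrix.conjTranspose_eq_transpose_of_trivial, Matrix.vecMul_transpose]

private lemma dotProduct_self_nonneg (x : Fin k → ℝ) : 0 ≤ x ⬝ᵥ x :=
  Finset.sum_nonneg fun i _ => mul_self_nonneg _

private lemma mulVec_dot_le (B : Matrix (Fin n) (Fin k) ℝ) (x : Fin k → ℝ) :
    (B *ᵥ x) ⬝ᵥ (B *ᵥ x) ≤ smax B ^ 2 * (x ⬝ᵥ x) := by
  classical
  obtain ⟨V, hq, hn, _⟩ := spectral_quad (Matrix.isHermitian_conjTranspose_mul_self B)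
  have hsm : ∀ j, (Matrix.isHermitian_conjTranspose_mul_self B).eigenvalues j ≤ smax B ^ 2 := by
    intro j
    have h0 := Matrix.eigenvalues_conjTranspose_mul_self_nonneg B j
    set e := Fin.revPerm.trans
      (Tuple.sort (Matrix.isHermitian_conjTranspose_mul_self B).eigenvalues) with he
    have hsv : Real.sqrt ((Matrix.isHermitian_conjTranspose_mul_self B).eigenvalues j)
        ≤ smax B := by
      have heq : sval B (e.symm j)
          = Real.sqrt ((Matrix.isHermitian_conjTranspose_mul_self B).eigenvalues j) := by
        rw [sval_eq, ← he, Equiv.apply_symm_apply]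
      rw [← heq]
      exact sval_le_smax B _
    calc (Matrix.isHermitian_conjTranspose_mul_self B).eigenvalues j
        = Real.sqrt ((Matrix.isHermitian_conjTranspose_mul_self B).eigenvalues j) ^ 2 :=
          (Real.sq_sqrt h0).symm
      _ ≤ smax B ^ 2 := pow_le_pow_left₀ (Real.sqrt_nonneg _) hsv 2
  rw [← dot_mulVec_self, hq x, hn x, Finset.mul_sum]
  exact Finset.sum_le_sum fun j _ => mul_le_mul_of_nonneg_right (hsm j) (sq_nonneg _)

open Classical in
private lemma count_lt_sval_le_rank (Xt B Y : Matrix (Fin n) (Fin k) ℝ) (θ : ℝ)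
    (hθ : 0 ≤ θ) (hY : Y = Xt + B)
    (hB : ∀ x : Fin k → ℝ, (B *ᵥ x) ⬝ᵥ (B *ᵥ x) ≤ θ ^ 2 * (x ⬝ᵥ x)) :
    (Finset.univ.filter fun j => θ < sval Y j).card ≤ Xt.rank := by
  classical
  set μ := (Matrix.isHermitian_conjTranspose_mul_self Y).eigenvalues with hμ
  set S : Finset (Fin k) := Finset.univ.filter (fun j => θ ^ 2 < μ j) with hS
  have hcard : (Finset.univ.filter fun j => θ < sval Y j).card = S.card := by
    have hstep1 : (Finset.univ.filter fun j => θ < sval Y j)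
        = Finset.univ.filter fun i => θ ^ 2 < μ
            ((Fin.revPerm.trans (Tuple.sort μ)) i) := by
      apply Finset.filter_congr
      intro i _
      rw [sval_eq, ← hμ]
      exact Real.lt_sqrt hθ
    rw [hstep1, hS, card_filter_perm (Fin.revPerm.trans (Tuple.sort μ)) (fun j => θ ^ 2 < μ j)]
  by_contra hcon
  push_neg at hcon
  rw [hcard] at hcon
  obtain ⟨V, hq, hnrm, hinj⟩ := spectral_quad (Matrix.isHermitian_conjTranspose_mul_self Y)
  set φ : (Fin k → ℝ) →ₗ[ℝ] ({j : Fin k // j ∉ S} → ℝ) :=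
    (LinearMap.funLeft ℝ ℝ (Subtype.val : {j : Fin k // j ∉ S} → Fin k)).comp
      V.mulVecLin with hφ
  have e1 := LinearMap.finrank_range_add_finrank_ker φ
  have e2 : Module.finrank ℝ (LinearMap.range φ) ≤ Fintype.card {j : Fin k // j ∉ S} := by
    refine le_trans (Submodule.finrank_le _) ?_
    rw [Module.finrank_fintype_fun_eq_card]
  have e3 : Fintype.card {j : Fin k // j ∉ S} + S.card = k := by
    rw [Fintype.card_subtype]
    have := Finset.card_filter_add_card_filter_not
      (s := (Finset.univ : Finset (Fin k))) (p := fun j => j ∈ S)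
    simp only [Finset.filter_mem_eq_inter, Finset.univ_inter, Finset.card_univ,
      Fintype.card_fin] at this ⊢
    omega
  have e4 := LinearMap.finrank_range_add_finrank_ker (Xt.mulVecLin)
  have e5 : Xt.rank = Module.finrank ℝ (LinearMap.range Xt.mulVecLin) := rfl
  have e6 := Submodule.finrank_sup_add_finrank_inf_eq (LinearMap.ker φ)
    (LinearMap.ker Xt.mulVecLin)
  have e7 : Module.finrank ℝ
      ((LinearMap.ker φ ⊔ LinearMap.ker Xt.mulVecLin : Submodule ℝ (Fin k → ℝ)) :
        Submodule ℝ (Fin k → ℝ)) ≤ k := by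
    refine le_trans (Submodule.finrank_le _) ?_
    rw [Module.finrank_fintype_fun_eq_card, Fintype.card_fin]
  rw [Module.finrank_fintype_fun_eq_card, Fintype.card_fin] at e1 e4
  have hpos : 0 < Module.finrank ℝ
      ((LinearMap.ker φ ⊓ LinearMap.ker Xt.mulVecLin : Submodule ℝ (Fin k → ℝ)) :
        Submodule ℝ (Fin k → ℝ)) := by omega
  have hne : (LinearMap.ker φ ⊓ LinearMap.ker Xt.mulVecLin : Submodule ℝ (Fin k → ℝ)) ≠ ⊥ := by
    intro hbot
    rw [hbot, finrank_bot] at hpos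
    exact lt_irrefl 0 hpos
  obtain ⟨x, hx, hx0⟩ := (Submodule.ne_bot_iff _).mp hne
  have hxφ : φ x = 0 := (LinearMap.mem_ker).mp (Submodule.mem_inf.mp hx).1
  have hxX : Xt *ᵥ x = 0 := by
    have := (LinearMap.mem_ker).mp (Submodule.mem_inf.mp hx).2
    rwa [Matrix.mulVecLin_apply] at this
  set c := V *ᵥ x with hc
  have hcS : ∀ j, j ∉ S → c j = 0 := by
    intro j hj
    have := congrFun hxφ ⟨j, hj⟩
    simpa [hφ, LinearMap.funLeft_apply, Matrix.mulVecLin_apply] using this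
  have hc0 : c ≠ 0 := by
    intro h
    apply hx0
    apply hinj
    simp only [← hc, h, Matrix.mulVec_zero]
  obtain ⟨j0, hj0⟩ := Function.ne_iff.mp hc0
  have hj0S : j0 ∈ S := by
    by_contra h
    exact hj0 (hcS j0 h)
  have hYx : Y *ᵥ x = B *ᵥ x := by
    rw [hY, Matrix.add_mulVec, hxX, zero_add]
  have hupper : x ⬝ᵥ ((Yᴴ * Y) *ᵥ x) ≤ θ ^ 2 * (x ⬝ᵥ x) := by
    rw [dot_mulVec_self, hYx]
    exact hB x
  have hsum1 : ∑ j, μ j * c j ^ 2 = ∑ j ∈ S, μ j * c j ^ 2 := by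
    symm
    apply Finset.sum_subset (Finset.subset_univ S)
    intro j _ hj
    rw [hcS j hj]
    ring
  have hsum2 : ∑ j, θ ^ 2 * c j ^ 2 = ∑ j ∈ S, θ ^ 2 * c j ^ 2 := by
    symm
    apply Finset.sum_subset (Finset.subset_univ S)
    intro j _ hj
    rw [hcS j hj]
    ring
  have hlower : θ ^ 2 * (x ⬝ᵥ x) < x ⬝ᵥ ((Yᴴ * Y) *ᵥ x) := by
    rw [hq x, hnrm x, Finset.mul_sum, hsum1, hsum2]
    apply Finset.sum_lt_sum
    · intro j hjS
      have : θ ^ 2 < μ j := (Finset.mem_filter.mp hjS).2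
      exact mul_le_mul_of_nonneg_right this.le (sq_nonneg _)
    · refine ⟨j0, hj0S, ?_⟩
      have h1 : θ ^ 2 < μ j0 := (Finset.mem_filter.mp hj0S).2
      have h2 : 0 < c j0 ^ 2 := by rw [sq]; exact mul_self_pos.mpr hj0
      exact mul_lt_mul_of_pos_right h1 h2
  exact lt_irrefl _ (hlower.trans_le hupper)

open Classical in
private lemma rank_hardThreshold_le (θ : ℝ) (hθ : 0 ≤ θ) (Y : Matrix (Fin n) (Fin k) ℝ) :
    (hardThreshold θ Y).rank ≤ (Finset.univ.filter fun j => θ < sval Y j).card := by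
  classical
  unfold hardThreshold
  split_ifs with h
  · set e : Fin k → ℝ := fun j => if θ < sval Y j then (1 : ℝ) else 0 with he
    have hfac : (Matrix.of fun i j =>
        if |svalMatrix Y i j| ≤ θ then 0 else svalMatrix Y i j)
        = svalMatrix Y * Matrix.diagonal e := by
      ext i j
      rw [Matrix.mul_diagonal, Matrix.of_apply]
      by_cases hij : (i : ℕ) = (j : ℕ)
      · have hsv : svalMatrix Y i j = sval Y j := by simp [svalMatrix, hij]
        rw [hsv, abs_of_nonneg (sval_nonneg Y j)]
        by_cases hlt : θ < sval Y j
        · rw [if_neg (not_le.mpr hlt)]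
          simp [e, hlt]
        · rw [if_pos (not_lt.mp hlt)]
          simp [e, hlt]
      · have hsv : svalMatrix Y i j = 0 := by simp [svalMatrix, hij]
        rw [hsv, abs_zero, if_pos hθ, zero_mul]
    calc (h.choose.1 * Matrix.of (fun i j =>
            if |svalMatrix Y i j| ≤ θ then 0 else svalMatrix Y i j) * h.choose.2ᵀ).rank
        ≤ (h.choose.1 * Matrix.of (fun i j =>
            if |svalMatrix Y i j| ≤ θ then 0 else svalMatrix Y i j)).rank :=
          Matrix.rank_mul_le_left _ _
      _ ≤ (Matrix.of (fun i j =>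
            if |svalMatrix Y i j| ≤ θ then 0 else svalMatrix Y i j)).rank :=
          Matrix.rank_mul_le_right _ _
      _ = (svalMatrix Y * Matrix.diagonal e).rank := by rw [hfac]
      _ ≤ (Matrix.diagonal e).rank := Matrix.rank_mul_le_right _ _
      _ = Fintype.card {j // e j ≠ 0} := Matrix.rank_diagonal e
      _ = (Finset.univ.filter fun j => θ < sval Y j).card := by
          rw [Fintype.card_subtype]
          congr 1
          apply Finset.filter_congr
          intro j _
          rw [he]
          by_cases hj : θ < sval Y j <;> simp [hj]
  · simp

end helpers

attribute [local instance] Matrix.frobeniusNormedAddCommGroup Matrix.frobeniusNormedSpace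

theorem pgd_support_shrinkage    {n k : ℕ} (g : Matrix (Fin n) (Fin k) ℝ → ℝ)
    (gradg : Matrix (Fin n) (Fin k) ℝ → Matrix (Fin n) (Fin k) ℝ) (L G lam s : ℝ)
    (hconv : ConvexOn ℝ Set.univ g) (hdiff : Differentiable ℝ g)
    (hgrad : ∀ X V, fderiv ℝ g X V = frobInner (gradg X) V)
    (hlip : ∀ A B, frobNorm (gradg A - gradg B) ≤ L * frobNorm (A - B))
    (hG : ∀ A, smax (gradg A) ≤ G)
    (hlam : 0 < lam) (hs : 0 < s) (hL : 0 < L)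
    (hstep : s ≤ min (2 * lam / G ^ 2) (1 / L))
    (X : ℕ → Matrix (Fin n) (Fin k) ℝ)
    (hX : ∀ t, X (t + 1) = hardThreshold (Real.sqrt (2 * lam * s)) (X t - s • gradg (X t)))
    :
    ∀ t : ℕ, suppσ (X (t + 1)) ⊆ suppσ (X t) ∧ (X (t + 1)).rank ≤ (X t).rank := by
  classical
  have hG0 : 0 ≤ G := le_trans (smax_nonneg (gradg (X 0))) (hG (X 0))
  have hBbound : ∀ Xt : Matrix (Fin n) (Fin k) ℝ, ∀ x : Fin k → ℝ,
      ((-(s • gradg Xt)) *ᵥ x) ⬝ᵥ ((-(s • gradg Xt)) *ᵥ x)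
        ≤ Real.sqrt (2 * lam * s) ^ 2 * (x ⬝ᵥ x) := by
    intro Xt x
    have hx0 : 0 ≤ x ⬝ᵥ x := dotProduct_self_nonneg x
    have h1 := mulVec_dot_le (gradg Xt) x
    have hsm0 : 0 ≤ smax (gradg Xt) := smax_nonneg _
    have h2 : smax (gradg Xt) ^ 2 ≤ G ^ 2 := pow_le_pow_left₀ hsm0 (hG Xt) 2
    have h3 : s ^ 2 * G ^ 2 ≤ 2 * lam * s := by
      rcases eq_or_lt_of_le hG0 with hG' | hG'
      · rw [← hG']
        have : (0:ℝ) ≤ 2 * lam * s := by positivity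
        simpa using this
      · have hstep1 : s ≤ 2 * lam / G ^ 2 := (le_min_iff.mp hstep).1
        have hG2 : 0 < G ^ 2 := by positivity
        rw [le_div_iff₀ hG2] at hstep1
        nlinarith [hs.le]
    have hsq : Real.sqrt (2 * lam * s) ^ 2 = 2 * lam * s := by
      apply Real.sq_sqrt
      positivity
    rw [Matrix.neg_mulVec, Matrix.smul_mulVec, neg_dotProduct,
      dotProduct_neg, neg_neg, smul_dotProduct, dotProduct_smul,
      smul_eq_mul, smul_eq_mul, hsq]
    have h4 : (gradg Xt *ᵥ x) ⬝ᵥ (gradg Xt *ᵥ x) ≤ G ^ 2 * (x ⬝ᵥ x) :=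
      h1.trans (mul_le_mul_of_nonneg_right h2 hx0)
    calc s * (s * ((gradg Xt *ᵥ x) ⬝ᵥ (gradg Xt *ᵥ x)))
        = s ^ 2 * ((gradg Xt *ᵥ x) ⬝ᵥ (gradg Xt *ᵥ x)) := by ring
      _ ≤ s ^ 2 * (G ^ 2 * (x ⬝ᵥ x)) := by
          apply mul_le_mul_of_nonneg_left h4 (sq_nonneg s)
      _ = s ^ 2 * G ^ 2 * (x ⬝ᵥ x) := by ring
      _ ≤ 2 * lam * s * (x ⬝ᵥ x) := mul_le_mul_of_nonneg_right h3 hx0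
  intro t
  have hrank : (X (t + 1)).rank ≤ (X t).rank := by
    rw [hX t]
    refine le_trans (rank_hardThreshold_le _ (Real.sqrt_nonneg _) _) ?_
    refine count_lt_sval_le_rank (X t) (-(s • gradg (X t))) _ _ (Real.sqrt_nonneg _)
      ?_ (hBbound (X t))
    rw [sub_eq_add_neg]
  refine ⟨suppσ_subset_of_card_le ?_, hrank⟩
  rw [card_suppσ, card_suppσ]
  exact hrank
end

section
/- If s ≤ min{2λ/G², 1/L}, then the sequences {Z^t}_{t≥1} and {X^t}_{t≥1} generated by Algorithm 3 (monotone accelerated proximal gradient descent with support projection) satisfy supp(σ(Z^{t+1})) ⊆ supp(σ(Z^t)) and supp(σ(X^{t+1})) ⊆ supp(σ(X^t)) for all t ≥ 1. -/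
open Matrix Finset Filter Topology

namespace APGaux

open Matrix Finset

variable {n k : ℕ}

lemma sval_nonneg (A : Matrix (Fin n) (Fin k) ℝ) (i : Fin k) : 0 ≤ sval A i :=
  Real.sqrt_nonneg _

lemma sval_antitone (A : Matrix (Fin n) (Fin k) ℝ) : Antitone (sval A) := by
  intro i j hij
  exact Real.sqrt_le_sqrt
    ((Tuple.monotone_sort (Matrix.isHermitian_conjTranspose_mul_self A).eigenvalues)
      (Fin.rev_le_rev.mpr hij) :)

lemma sval_sq (A : Matrix (Fin n) (Fin k) ℝ) (i : Fin k) :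
    sval A i ^ 2 = (Matrix.isHermitian_conjTranspose_mul_self A).eigenvalues
      (Tuple.sort (Matrix.isHermitian_conjTranspose_mul_self A).eigenvalues i.rev) :=
  Real.sq_sqrt (Matrix.eigenvalues_conjTranspose_mul_self_nonneg A _)

lemma eig_eq_sval_sq (A : Matrix (Fin n) (Fin k) ℝ) (j : Fin k) :
    (Matrix.isHermitian_conjTranspose_mul_self A).eigenvalues j
      = sval A (((Tuple.sort (Matrix.isHermitian_conjTranspose_mul_self A).eigenvalues).symm j).rev)
        ^ 2 := by
  rw [sval_sq, Fin.rev_rev, Equiv.apply_symm_apply]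

lemma sval_ne_zero_iff (A : Matrix (Fin n) (Fin k) ℝ) (i : Fin k) :
    sval A i ≠ 0 ↔ (Matrix.isHermitian_conjTranspose_mul_self A).eigenvalues
      (Tuple.sort (Matrix.isHermitian_conjTranspose_mul_self A).eigenvalues i.rev) ≠ 0 := by
  have hnn := Matrix.eigenvalues_conjTranspose_mul_self_nonneg A
    ((Tuple.sort (Matrix.isHermitian_conjTranspose_mul_self A).eigenvalues) i.rev)
  constructor
  · intro h h0
    exact h (by rw [sval, h0, Real.sqrt_zero])
  · intro h h0
    exact h (le_antisymm (Real.sqrt_eq_zero'.mp h0) hnn)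

lemma sval_le_smax (A : Matrix (Fin n) (Fin k) ℝ) (i : Fin k) : sval A i ≤ smax A :=
  le_ciSup (Set.Finite.bddAbove (Set.finite_range _)) i

lemma smax_nonneg (A : Matrix (Fin n) (Fin k) ℝ) : 0 ≤ smax A := by
  rcases Nat.eq_zero_or_pos k with hk | hk
  · subst hk
    rw [smax, Real.iSup_of_isEmpty]
  · exact (sval_nonneg A ⟨0, hk⟩).trans (sval_le_smax A ⟨0, hk⟩)

lemma mem_suppσ {A : Matrix (Fin n) (Fin k) ℝ} {i : Fin k} :
    i ∈ suppσ A ↔ sval A i ≠ 0 := by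
  simp [suppσ]

lemma dot_sum {m : ℕ} {l : Type*} [Fintype l] (x : Fin m → ℝ) (a : l → ℝ)
    (v : l → (Fin m → ℝ)) :
    x ⬝ᵥ (∑ j, a j • v j) = ∑ j, a j * (x ⬝ᵥ v j) := by
  simp [dotProduct, Finset.mul_sum]
  rw [Finset.sum_comm]
  refine Finset.sum_congr rfl fun j _ => Finset.sum_congr rfl fun i _ => by ring

/-- Spectral expansion of ‖Mx‖². -/
lemma spec (M : Matrix (Fin n) (Fin k) ℝ) (x : Fin k → ℝ) :
    M.mulVec x ⬝ᵥ M.mulVec x = ∑ j, (isHermitian_conjTranspose_mul_self M).eigenvalues j *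
      ((isHermitian_conjTranspose_mul_self M).eigenvectorBasis.repr (WithLp.toLp 2 x) j)^2 := by
  set hH := isHermitian_conjTranspose_mul_self M with hHdef
  set b := hH.eigenvectorBasis with hbdef
  set c : Fin k → ℝ := fun j => b.repr (WithLp.toLp 2 x) j with hcdef
  have hx : ∑ i, c i • (b i : Fin k → ℝ) = x := by
    have := congrArg (WithLp.linearEquiv 2 ℝ (Fin k → ℝ)) (b.sum_repr (WithLp.toLp 2 x))
    simpa [map_sum] using this
  have hcx : ∀ j, x ⬝ᵥ (b j : Fin k → ℝ) = c j := by
    intro j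
    have : c j = inner ℝ (b j) (WithLp.toLp 2 x) := b.repr_apply_apply _ j
    rw [this]
    simp [PiLp.inner_apply, RCLike.inner_apply, dotProduct, mul_comm]
  have heig : ∀ j, (Mᴴ * M).mulVec (b j : Fin k → ℝ) = hH.eigenvalues j • (b j : Fin k → ℝ) := by
    intro j
    show (Mᴴ * M).mulVec ⇑(hH.eigenvectorBasis j) = hH.eigenvalues j • ⇑(hH.eigenvectorBasis j)
    exact hH.mulVec_eigenvectorBasis j
  have h1 : (Mᴴ * M).mulVec x = ∑ j, (c j * hH.eigenvalues j) • (b j : Fin k → ℝ) := by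
    conv_lhs => rw [← hx]
    rw [← mulVecLin_apply, map_sum]
    refine Finset.sum_congr rfl fun j _ => ?_
    rw [_root_.map_smul, mulVecLin_apply, heig j, smul_smul]
  have h0 : M.mulVec x ⬝ᵥ M.mulVec x = x ⬝ᵥ ((Mᴴ * M).mulVec x) := by
    rw [← mulVec_mulVec, dotProduct_mulVec x, vecMul_conjTranspose]
    simp
  rw [h0, h1, dot_sum]
  refine Finset.sum_congr rfl fun j _ => ?_
  rw [hcx j]
  ring

/-- Parseval. -/
lemma parseval (M : Matrix (Fin n) (Fin k) ℝ) (x : Fin k → ℝ) :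
    ∑ j, ((isHermitian_conjTranspose_mul_self M).eigenvectorBasis.repr (WithLp.toLp 2 x) j)^2 = x ⬝ᵥ x := by
  set b := (isHermitian_conjTranspose_mul_self M).eigenvectorBasis
  have := b.repr.inner_map_map (WithLp.toLp 2 x) (WithLp.toLp 2 x)
  simp only [PiLp.inner_apply, RCLike.inner_apply] at this
  simpa [dotProduct, pow_two, mul_comm] using this

/-- Operator-norm bound via the largest singular value. -/
lemma mulVec_dot_le (N : Matrix (Fin n) (Fin k) ℝ) (x : Fin k → ℝ) :
    N.mulVec x ⬝ᵥ N.mulVec x ≤ smax N ^ 2 * (x ⬝ᵥ x) := by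
  rw [spec, ← parseval N x, Finset.mul_sum]
  refine Finset.sum_le_sum fun j _ => mul_le_mul_of_nonneg_right ?_ (sq_nonneg _)
  rw [eig_eq_sval_sq N j]
  exact pow_le_pow_left₀ (sval_nonneg _ _) (sval_le_smax _ _) 2

/-- Courant–Fischer style bound: if `M` is controlled on a subspace of
codimension at most `r`, then the `(r+1)`-st singular value is small. -/
lemma sval_le_of_subspace (M : Matrix (Fin n) (Fin k) ℝ) (r : Fin k) (c : ℝ) (hc : 0 ≤ c)
    (K : Submodule ℝ (Fin k → ℝ)) (hdim : k ≤ Module.finrank ℝ K + (r : ℕ))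
    (hbound : ∀ x ∈ K, M.mulVec x ⬝ᵥ M.mulVec x ≤ c^2 * (x ⬝ᵥ x)) :
    sval M r ≤ c := by
  classical
  set hH := isHermitian_conjTranspose_mul_self M with hHdef
  set b := hH.eigenvectorBasis with hbdef
  set ψ : Fin k ≃ Fin k := (Fin.revPerm.trans (Tuple.sort hH.eigenvalues)) with hψdef
  have hψ : ∀ i : Fin k, ψ i = Tuple.sort hH.eigenvalues i.rev := fun i => rfl
  set f : {i : Fin k // i ≤ r} → (Fin k → ℝ) := fun i => (b (ψ i) : Fin k → ℝ) with hfdef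
  have hfind : LinearIndependent ℝ f := by
    have h1 : LinearIndependent ℝ (fun j : Fin k => (b j : EuclideanSpace ℝ (Fin k))) :=
      b.orthonormal.linearIndependent
    exact (h1.map' (WithLp.linearEquiv 2 ℝ (Fin k → ℝ)).toLinearMap (LinearEquiv.ker _)).comp (fun i : {i : Fin k // i ≤ r} => ψ i)
      (ψ.injective.comp fun a b h => Subtype.ext h)
  set T : Submodule ℝ (Fin k → ℝ) := Submodule.span ℝ (Set.range f) with hTdef
  have hTrank : Module.finrank ℝ T = (r : ℕ) + 1 := by
    rw [hTdef, finrank_span_eq_card hfind]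
    rw [Fintype.card_subtype]
    have : (univ.filter (fun i : Fin k => i ≤ r)) = Finset.Iic r := by
      ext i; simp
    rw [this, Fin.card_Iic]
  have hsup : Module.finrank ℝ ↥(T ⊔ K) ≤ k := by
    have := Submodule.finrank_le (T ⊔ K)
    simpa [Module.finrank_pi, Fintype.card_fin] using this
  have hinf : 0 < Module.finrank ℝ ↥(T ⊓ K) := by
    have hadd := Submodule.finrank_sup_add_finrank_inf_eq T K
    omega
  have : Nontrivial ↥(T ⊓ K) := Module.finrank_pos_iff.mp hinf
  obtain ⟨⟨x, hxmem⟩, hxne⟩ := exists_ne (0 : ↥(T ⊓ K))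
  have hxne0 : x ≠ 0 := fun h => hxne (Subtype.ext h)
  have hxT : x ∈ T := hxmem.1
  have hxK : x ∈ K := hxmem.2
  have hdot : ∀ p q : Fin k, (b p : Fin k → ℝ) ⬝ᵥ (b q : Fin k → ℝ)
      = if p = q then 1 else 0 := by
    intro p q
    have := orthonormal_iff_ite.mp b.orthonormal p q
    simp only [PiLp.inner_apply, RCLike.inner_apply, starRingEnd_apply, star_trivial] at this
    simpa [dotProduct, mul_comm] using this
  rw [hTdef, Submodule.mem_span_range_iff_exists_fun] at hxT
  obtain ⟨a, ha⟩ := hxT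
  set cf : Fin k → ℝ := fun j => b.repr (WithLp.toLp 2 x) j with hcfdef
  have hcx : ∀ j, cf j = x ⬝ᵥ (b j : Fin k → ℝ) := by
    intro j
    have h1 : cf j = inner ℝ (b j) (WithLp.toLp 2 x) := b.repr_apply_apply _ j
    rw [h1]
    simp [PiLp.inner_apply, RCLike.inner_apply, dotProduct, mul_comm]
  have hvan : ∀ j : Fin k, cf j ≠ 0 → ∃ i : {i : Fin k // i ≤ r}, ψ i = j := by
    intro j hj
    by_contra hno
    push_neg at hno
    apply hj
    rw [hcx j, ← ha, dotProduct_comm, dot_sum]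
    refine Finset.sum_eq_zero fun i _ => ?_
    rw [hfdef]
    simp only
    rw [dotProduct_comm, hdot (ψ i) j, if_neg (hno i)]
    simp
  have hlow : sval M r ^ 2 * (x ⬝ᵥ x) ≤ M.mulVec x ⬝ᵥ M.mulVec x := by
    rw [spec M x, ← parseval M x, Finset.mul_sum]
    refine Finset.sum_le_sum fun j _ => ?_
    rcases eq_or_ne (cf j) 0 with h0 | h0
    · show sval M r ^ 2 * (b.repr (WithLp.toLp 2 x) j)^2 ≤ _
      rw [show b.repr (WithLp.toLp 2 x) j = cf j from rfl, h0]
      simp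
    · obtain ⟨i, hi⟩ := hvan j h0
      have hev : sval M r ^ 2 ≤ hH.eigenvalues j := by
        rw [sval_sq, ← hi, hψ i]
        exact (Tuple.monotone_sort hH.eigenvalues (Fin.rev_le_rev.mpr i.2) :)
      exact mul_le_mul_of_nonneg_right hev (sq_nonneg _)
  have hup := hbound x hxK
  have hxx : 0 < x ⬝ᵥ x := by
    obtain ⟨i0, hi0⟩ := Function.ne_iff.mp hxne0
    exact Finset.sum_pos' (fun i _ => mul_self_nonneg _)
      ⟨i0, Finset.mem_univ _, mul_self_pos.mpr hi0⟩
  have hsq : sval M r ^ 2 ≤ c ^ 2 := by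
    have := hlow.trans hup
    exact le_of_mul_le_mul_right (by linarith [this]) hxx
  calc sval M r = Real.sqrt (sval M r ^ 2) := (Real.sqrt_sq (sval_nonneg M r)).symm
    _ ≤ Real.sqrt (c ^ 2) := Real.sqrt_le_sqrt hsq
    _ = c := Real.sqrt_sq hc

/-- The number of nonzero singular values is the rank. -/
lemma card_suppσ_eq_rank (A : Matrix (Fin n) (Fin k) ℝ) : (suppσ A).card = A.rank := by
  classical
  have h1 : A.rank = (Aᴴ * A).rank := (Matrix.rank_conjTranspose_mul_self A).symm
  rw [h1, (Matrix.isHermitian_conjTranspose_mul_self A).rank_eq_card_non_zero_eigs,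
    Fintype.card_subtype]
  set ev := (Matrix.isHermitian_conjTranspose_mul_self A).eigenvalues with hev
  refine Finset.card_bij (fun i _ => Tuple.sort ev i.rev) ?_ ?_ ?_
  · intro i hi
    rw [Finset.mem_filter]
    exact ⟨Finset.mem_univ _, (sval_ne_zero_iff A i).mp (mem_suppσ.mp hi)⟩
  · intro i hi j hj hij
    have := (Tuple.sort ev).injective hij
    exact Fin.rev_injective this
  · intro j hj
    refine ⟨((Tuple.sort ev).symm j).rev, ?_, ?_⟩
    · rw [mem_suppσ, sval_ne_zero_iff, Fin.rev_rev, Equiv.apply_symm_apply]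
      exact (Finset.mem_filter.mp hj).2
    · show Tuple.sort ev (((Tuple.sort ev).symm j).rev).rev = j
      rw [Fin.rev_rev, Equiv.apply_symm_apply]

/-- Supports are nested initial segments: inclusion follows from cardinality. -/
lemma suppσ_subset_of_card_le {A B : Matrix (Fin n) (Fin k) ℝ}
    (h : (suppσ A).card ≤ (suppσ B).card) : suppσ A ⊆ suppσ B := by
  intro i hi
  by_contra hiB
  have hBi : sval B i = 0 := not_not.mp (fun hne => hiB (mem_suppσ.mpr hne))
  have hsubB : suppσ B ⊆ Finset.Iio i := by
    intro j hj
    rw [Finset.mem_Iio]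
    by_contra hji
    exact (mem_suppσ.mp hj) (le_antisymm (hBi ▸ sval_antitone B (not_lt.mp hji))
      (sval_nonneg B j))
  have hsubA : Finset.Iic i ⊆ suppσ A := by
    intro j hj
    rw [Finset.mem_Iic] at hj
    rw [mem_suppσ]
    intro h0
    exact (mem_suppσ.mp hi) (le_antisymm (h0 ▸ sval_antitone A hj) (sval_nonneg A i))
  have h1 : (suppσ B).card ≤ (i : ℕ) := by
    have := Finset.card_le_card hsubB
    rwa [Fin.card_Iio] at this
  have h2 : (i : ℕ) + 1 ≤ (suppσ A).card := by
    have := Finset.card_le_card hsubA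
    rwa [Fin.card_Iic] at this
  omega

/-- A matrix supported on columns in `S` has rank at most `#S`. -/
lemma rank_le_card_cols (D : Matrix (Fin n) (Fin k) ℝ) (S : Finset (Fin k))
    (hD : ∀ i j, j ∉ S → D i j = 0) : D.rank ≤ S.card := by
  classical
  have hfac : D = D * Matrix.diagonal (fun j => if j ∈ S then (1:ℝ) else 0) := by
    ext i j
    rw [Matrix.mul_diagonal]
    by_cases h : j ∈ S
    · simp [h]
    · simp [h, hD i j h]
  calc D.rank = (D * Matrix.diagonal (fun j => if j ∈ S then (1:ℝ) else 0)).rank := by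
        rw [← hfac]
    _ ≤ (Matrix.diagonal (fun j => if j ∈ S then (1:ℝ) else 0)).rank :=
        Matrix.rank_mul_le_right _ _
    _ ≤ S.card := by
        rw [Matrix.rank_diagonal, Fintype.card_subtype]
        refine le_of_eq (congrArg Finset.card ?_)
        ext j
        by_cases h : j ∈ S <;> simp [h]

lemma rank_suppProj_le (S : Finset (Fin k)) (A : Matrix (Fin n) (Fin k) ℝ) :
    (suppProj S A).rank ≤ S.card := by
  classical
  rw [suppProj]
  split
  · refine le_trans (Matrix.rank_mul_le_left _ _) ?_
    refine le_trans (Matrix.rank_mul_le_right _ _) ?_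
    refine rank_le_card_cols _ S fun i j hj => ?_
    simp [hj]
  · simp

lemma rank_hardThreshold_le (θ : ℝ) (A : Matrix (Fin n) (Fin k) ℝ) :
    (hardThreshold θ A).rank ≤ (Finset.univ.filter fun j => θ < sval A j).card := by
  classical
  rw [hardThreshold]
  split
  · refine le_trans (Matrix.rank_mul_le_left _ _) ?_
    refine le_trans (Matrix.rank_mul_le_right _ _) ?_
    refine rank_le_card_cols _ _ fun i j hj => ?_
    rw [Finset.mem_filter, not_and] at hj
    have hj' : sval A j ≤ θ := not_lt.mp (hj (Finset.mem_univ _))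
    rw [Matrix.of_apply]
    by_cases hij : (i : ℕ) = (j : ℕ)
    · rw [if_pos]
      rw [svalMatrix, Matrix.of_apply, if_pos hij]
      rw [abs_of_nonneg (sval_nonneg A j)]
      exact hj'
    · have : svalMatrix A i j = 0 := by rw [svalMatrix, Matrix.of_apply, if_neg hij]
      rw [this]
      split <;> simp
  · simp

lemma rank_add_finrank_ker (A : Matrix (Fin n) (Fin k) ℝ) :
    A.rank + Module.finrank ℝ (LinearMap.ker A.mulVecLin) = k := by
  have := LinearMap.finrank_range_add_finrank_ker A.mulVecLin
  rw [Matrix.rank]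
  simpa [Module.finrank_pi, Fintype.card_fin] using this

lemma card_filter_coe_lt (r : ℕ) :
    (Finset.univ.filter fun j : Fin k => (j : ℕ) < r).card ≤ r := by
  classical
  have h := Finset.card_le_card_of_injOn
    (s := Finset.univ.filter fun j : Fin k => (j : ℕ) < r) (t := Finset.range r)
    (fun j => (j : ℕ))
    (fun j hj => Finset.mem_range.mpr (Finset.mem_filter.mp hj).2)
    (fun a _ b _ h => Fin.val_injective h)
  simpa [Finset.card_range] using h

/-- Main analytic step: hard-thresholding after a small perturbation of a
low-rank matrix does not increase the rank. -/
lemma rank_hardThreshold_sub_le (Vt E : Matrix (Fin n) (Fin k) ℝ) (θ : ℝ) (hθ : 0 ≤ θ)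
    (hE : ∀ x : Fin k → ℝ, E.mulVec x ⬝ᵥ E.mulVec x ≤ θ^2 * (x ⬝ᵥ x)) :
    (hardThreshold θ (Vt - E)).rank ≤ Vt.rank := by
  classical
  set W := Vt - E with hW
  refine le_trans (rank_hardThreshold_le θ W) ?_
  refine le_trans (Finset.card_le_card ?_) (card_filter_coe_lt Vt.rank)
  intro j hj
  rw [Finset.mem_filter] at hj ⊢
  refine ⟨Finset.mem_univ _, ?_⟩
  by_contra hge
  have hge' : Vt.rank ≤ (j : ℕ) := not_lt.mp hge
  have hker := rank_add_finrank_ker Vt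
  have hsv : sval W j ≤ θ := by
    refine sval_le_of_subspace W j θ hθ (LinearMap.ker Vt.mulVecLin) (by omega) ?_
    intro x hx
    have hx0 : Vt.mulVec x = 0 := hx
    have hWx : W.mulVec x = -(E.mulVec x) := by
      rw [hW, Matrix.sub_mulVec, hx0, zero_sub]
    rw [hWx]
    simpa using hE x
  exact absurd hj.2 (not_lt.mpr hsv)

end APGaux

attribute [local instance] Matrix.frobeniusNormedAddCommGroup Matrix.frobeniusNormedSpace

theorem apg_monotone_support_shrinkage    {n k : ℕ} (g : Matrix (Fin n) (Fin k) ℝ → ℝ)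
    (gradg : Matrix (Fin n) (Fin k) ℝ → Matrix (Fin n) (Fin k) ℝ) (L G lam s : ℝ)
    (hconv : ConvexOn ℝ Set.univ g) (hdiff : Differentiable ℝ g)
    (hgrad : ∀ X V, fderiv ℝ g X V = frobInner (gradg X) V)
    (hlip : ∀ A B, frobNorm (gradg A - gradg B) ≤ L * frobNorm (A - B))
    (hG : ∀ A, smax (gradg A) ≤ G)
    (hlam : 0 < lam) (hs : 0 < s) (hL : 0 < L)
    (hstep : s ≤ min (2 * lam / G ^ 2) (1 / L))
    (X U V Z : ℕ → Matrix (Fin n) (Fin k) ℝ) (α : ℕ → ℝ)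
    (hZ1 : Z 1 = X 0) (hX1 : X 1 = X 0) (hα0 : 0 < α 0)
    (hαrec : ∀ t : ℕ, α (t + 1) = (Real.sqrt (1 + 4 * α t ^ 2) + 1) / 2)
    (hU : ∀ t ≥ 1, U t = X t + ((α (t - 1) - 1) / α t) • (X t - X (t - 1)) +
      (α (t - 1) / α t) • (Z t - X t))
    (hV : ∀ t ≥ 1, V t = suppProj (suppσ (Z t)) (U t))
    (hZrec : ∀ t ≥ 1, Z (t + 1) = hardThreshold (Real.sqrt (2 * lam * s)) (V t - s • gradg (V t)))
    (hXrec : ∀ t ≥ 1, X (t + 1) =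
      if g (Z (t + 1)) + lam * ((Z (t + 1)).rank : ℝ) ≤ g (X t) + lam * ((X t).rank : ℝ) then
        Z (t + 1)
      else X t)
    :
    ∀ t ≥ 1, suppσ (Z (t + 1)) ⊆ suppσ (Z t) ∧ suppσ (X (t + 1)) ⊆ suppσ (X t) := by
  classical
  set θ := Real.sqrt (2 * lam * s) with hθdef
  have hθ0 : 0 ≤ θ := Real.sqrt_nonneg _
  have hG0 : 0 ≤ G := le_trans (APGaux.smax_nonneg (gradg 0)) (hG 0)
  have hsG : s * G ≤ θ := by
    rcases eq_or_lt_of_le hG0 with hG0' | hG0'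
    · rw [← hG0', mul_zero]; exact hθ0
    · have h1 : s ≤ 2 * lam / G ^ 2 := le_trans hstep (min_le_left _ _)
      have h2 : s * G ^ 2 ≤ 2 * lam := (le_div_iff₀ (by positivity)).mp h1
      have h3 : (s * G) ^ 2 ≤ 2 * lam * s := by nlinarith [hs.le]
      calc s * G = Real.sqrt ((s * G) ^ 2) := (Real.sqrt_sq (by positivity)).symm
        _ ≤ θ := Real.sqrt_le_sqrt h3
  have hE : ∀ N : Matrix (Fin n) (Fin k) ℝ, smax N ≤ G → ∀ x : Fin k → ℝ,
      (s • N).mulVec x ⬝ᵥ (s • N).mulVec x ≤ θ ^ 2 * (x ⬝ᵥ x) := by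
    intro N hN x
    rw [Matrix.smul_mulVec, smul_dotProduct, dotProduct_smul,
      smul_eq_mul, smul_eq_mul]
    have h2 := APGaux.mulVec_dot_le N x
    have hxx : (0:ℝ) ≤ x ⬝ᵥ x := Finset.sum_nonneg fun i _ => mul_self_nonneg _
    have hsm : smax N ^ 2 ≤ G ^ 2 := pow_le_pow_left₀ (APGaux.smax_nonneg N) hN 2
    have hθ2 : (s * G) ^ 2 ≤ θ ^ 2 := pow_le_pow_left₀ (by positivity) hsG 2
    have e1 : s * (s * (N.mulVec x ⬝ᵥ N.mulVec x)) ≤ s * (s * (smax N ^ 2 * (x ⬝ᵥ x))) := by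
      have := mul_le_mul_of_nonneg_left h2 hs.le
      exact mul_le_mul_of_nonneg_left this hs.le
    have e2 : smax N ^ 2 * (x ⬝ᵥ x) ≤ G ^ 2 * (x ⬝ᵥ x) :=
      mul_le_mul_of_nonneg_right hsm hxx
    have e3 : (s * G) ^ 2 * (x ⬝ᵥ x) ≤ θ ^ 2 * (x ⬝ᵥ x) :=
      mul_le_mul_of_nonneg_right hθ2 hxx
    nlinarith [mul_le_mul_of_nonneg_left e2 (mul_nonneg hs.le hs.le)]
  have hZstep : ∀ u, 1 ≤ u → (Z (u + 1)).rank ≤ (Z u).rank := by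
    intro u hu
    have hVu : (V u).rank ≤ (Z u).rank := by
      rw [hV u hu]
      exact le_trans (APGaux.rank_suppProj_le _ _)
        (le_of_eq (APGaux.card_suppσ_eq_rank _))
    have hmain := APGaux.rank_hardThreshold_sub_le (V u) (s • gradg (V u)) θ hθ0
      (hE _ (hG _))
    rw [hZrec u hu]
    exact le_trans hmain hVu
  have hZmono : ∀ u, 1 ≤ u → ∀ d : ℕ, (Z (u + d)).rank ≤ (Z u).rank := by
    intro u hu d
    induction d with
    | zero => exact le_refl _
    | succ d ih =>
      have h1 : u + (d + 1) = (u + d) + 1 := rfl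
      rw [h1]
      exact le_trans (hZstep (u + d) (by omega)) ih
  have hXrep : ∀ u, 1 ≤ u → ∃ j, 1 ≤ j ∧ j ≤ u ∧ X u = Z j := by
    intro u hu
    induction u with
    | zero => omega
    | succ u ih =>
      rcases Nat.lt_or_ge u 1 with h1 | h1
      · have hu0 : u = 0 := by omega
        subst hu0
        exact ⟨1, le_refl _, le_refl _, hX1.trans hZ1.symm⟩
      · obtain ⟨j, hj1, hj2, hj3⟩ := ih h1
        have hx := hXrec u h1
        split at hx
        · exact ⟨u + 1, by omega, le_refl _, hx⟩
        · exact ⟨j, hj1, by omega, hx.trans hj3⟩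
  intro t ht
  constructor
  · apply APGaux.suppσ_subset_of_card_le
    rw [APGaux.card_suppσ_eq_rank, APGaux.card_suppσ_eq_rank]
    exact hZstep t ht
  · obtain ⟨j, hj1, hj2, hj3⟩ := hXrep t ht
    have hx := hXrec t ht
    split at hx
    · apply APGaux.suppσ_subset_of_card_le
      rw [APGaux.card_suppσ_eq_rank, APGaux.card_suppσ_eq_rank, hx, hj3]
      rw [show t + 1 = j + (t + 1 - j) from by omega]
      exact hZmono j hj1 _
    · rw [hx]
end
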